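/- arXiv:2201.00838 — 4 statements merged into one kernel-verified Lean document; each statement's English description precedes it below -/
import Mathlib

section
/- Let H be a finite simple graph and let n, q, C be positive integers. If there exists an edge colouring of K_n with q colours that is C-bounded and contains no two vertex disjoint colour isomorphic copies of H, then there exists a proper edge colouring of K_n with (C+1)·q colours containing no two vertex disjoint colour isomorphic copies of H; in particular f_2(n,H) ≤ (C+1)·q. -/
open Finset

/-- A proper edge colouring of the complete graph on `α`. -/
def IsProperEdgeColouring {α Q : Type*} (χ : Sym2 α → Q) : Prop :=
  ∀ ⦃e f : Sym2 α⦄, ¬ e.IsDiag → ¬ f.IsDiag → e ≠ f → (∃ v, v ∈ e ∧ v ∈ f) → χ e ≠ χ f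

/-- `φ ψ` are two vertex disjoint colour isomorphic copies of `H` in `K_n`. -/
def IsColourIsoPair {n : ℕ} {V Q : Type*} (H : SimpleGraph V) (χ : Sym2 (Fin n) → Q)
    (φ ψ : V → Fin n) : Prop :=
  Function.Injective φ ∧ Function.Injective ψ ∧
    Disjoint (Set.range φ) (Set.range ψ) ∧
    ∀ u v, H.Adj u v → χ s(φ u, φ v) = χ s(ψ u, ψ v)

/-- `f₂(n,H)`: the least number of colours in a proper edge colouring of `K_n` with no
two vertex disjoint colour isomorphic copies of `H`. -/
noncomputable def f2 (n : ℕ) {V : Type*} (H : SimpleGraph V) : ℕ :=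
  sInf {q | ∃ χ : Sym2 (Fin n) → Fin q, IsProperEdgeColouring χ ∧
    ¬ ∃ φ ψ : V → Fin n, IsColourIsoPair H χ φ ψ}

/-- An edge colouring is `C`-bounded: every colour class has maximum degree at most `C`. -/
def IsBoundedColouring {n : ℕ} {Q : Type*} [DecidableEq Q] (χ : Sym2 (Fin n) → Q)
    (C : ℕ) : Prop :=
  ∀ (c : Q) (v : Fin n),
    (Finset.univ.filter (fun w => w ≠ v ∧ χ s(v, w) = c)).card ≤ C

namespace Viz

attribute [local instance] Classical.propDecidable

variable {α : Type*} [DecidableEq α] [Fintype α]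

/-- A partial proper edge colouring with colours `< N`, supported inside `E`. -/
structure Col (E : Finset (Sym2 α)) (N : ℕ) where
  f : α → α → Option ℕ
  symm : ∀ a b, f a b = f b a
  diag : ∀ a, f a a = none
  lt : ∀ a b k, f a b = some k → k < N
  proper : ∀ a b b' k, f a b = some k → f a b' = some k → b = b'
  supp : ∀ a b, f a b ≠ none → s(a, b) ∈ E

def usedP (g : α → α → Option ℕ) (x : α) (k : ℕ) : Prop := ∃ y, g x y = some k

lemma exists_free {E : Finset (Sym2 α)} {N C : ℕ} (G : Col E N)
    (hdeg : ∀ x : α, (E.filter (fun e => x ∈ e)).card ≤ C) (hN : C < N) (x : α) :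
    ∃ k, k < N ∧ ¬ usedP G.f x k := by
  classical
  set U : Finset ℕ := (Finset.range N).filter (fun k => usedP G.f x k) with hU
  have hsub : U ⊆ Finset.range N := Finset.filter_subset _ _
  have hcard : U.card ≤ C := by
    have : U.card ≤ (E.filter (fun e => x ∈ e)).card := by
      apply Finset.card_le_card_of_injOn
        (fun k => if h : ∃ y, G.f x y = some k then s(x, h.choose) else s(x, x))
      · intro k hk
        have hk' : usedP G.f x k := (Finset.mem_filter.mp hk).2
        rcases hk' with ⟨y, hy⟩
        have h : ∃ y, G.f x y = some k := ⟨y, hy⟩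
        simp only [dif_pos h]
        have hs := h.choose_spec
        refine Finset.mem_filter.mpr ⟨?_, ?_⟩
        · exact G.supp x h.choose (by simp [hs])
        · exact Sym2.mem_mk_left _ _
      · intro k hk k' hk' heq
        have hk2 : k ∈ U := hk
        have hk2' : k' ∈ U := hk'
        have h1 : ∃ y, G.f x y = some k := (Finset.mem_filter.mp hk2).2
        have h2 : ∃ y, G.f x y = some k' := (Finset.mem_filter.mp hk2').2
        dsimp only at heq
        rw [dif_pos h1, dif_pos h2] at heq
        have hs1 := h1.choose_spec
        have hs2 := h2.choose_spec
        have hne1 : h1.choose ≠ x := by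
          intro h; rw [h] at hs1; rw [G.diag] at hs1; exact (absurd hs1 (by simp))
        rw [Sym2.eq_iff] at heq
        have : h1.choose = h2.choose := by tauto
        rw [this] at hs1; rw [hs1] at hs2; exact (Option.some.injEq _ _ ▸ hs2 : k = k')
    exact this.trans (hdeg x)
  have : (Finset.range N \ U).Nonempty := by
    rw [← Finset.card_pos, Finset.card_sdiff_of_subset hsub, Finset.card_range]
    omega
  rcases this with ⟨k, hk⟩
  rw [Finset.mem_sdiff, Finset.mem_range] at hk
  refine ⟨k, hk.1, fun hused => hk.2 (Finset.mem_filter.mpr ⟨Finset.mem_range.mpr hk.1, hused⟩)⟩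

/-! ### Kempe chain flips -/

variable {E : Finset (Sym2 α)} {N : ℕ}

def sw (c d k : ℕ) : ℕ := if k = c then d else if k = d then c else k

lemma sw_invol (c d : ℕ) (hcd : c ≠ d) (k : ℕ) : sw c d (sw c d k) = k := by
  unfold sw
  by_cases h1 : k = c
  · simp [h1, hcd, hcd.symm]
  · by_cases h2 : k = d
    · simp [h1, h2, hcd, hcd.symm]
    · simp [h1, h2]

lemma sw_c (c d : ℕ) : sw c d c = d := by simp [sw]
lemma sw_d (c d : ℕ) (hcd : c ≠ d) : sw c d d = c := by simp [sw, hcd.symm]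
lemma sw_other (c d k : ℕ) (h1 : k ≠ c) (h2 : k ≠ d) : sw c d k = k := by simp [sw, h1, h2]

noncomputable def flip (c d : ℕ) (K : Set α) (g : α → α → Option ℕ) (x y : α) : Option ℕ :=
  if x ∈ K ∨ y ∈ K then Option.map (sw c d) (g x y) else g x y

set_option linter.unusedSectionVars false

lemma flip_mem (G : Col E N) (c d : ℕ) (K : Set α) {x : α} (hx : x ∈ K) :
    ∀ y, flip c d K G.f x y = Option.map (sw c d) (G.f x y) := by
  intro y; unfold flip; rw [if_pos (Or.inl hx)]

lemma flip_not_mem (G : Col E N) {c d : ℕ} {K : Set α}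
    (hcl : ∀ x y k, x ∈ K → G.f x y = some k → (k = c ∨ k = d) → y ∈ K)
    {x : α} (hx : x ∉ K) : ∀ y, flip c d K G.f x y = G.f x y := by
  intro y; unfold flip
  by_cases hy : y ∈ K
  · rw [if_pos (Or.inr hy)]
    rcases h : G.f x y with _ | k
    · rfl
    · have hk : k ≠ c ∧ k ≠ d := by
        constructor <;> intro hkc <;> subst hkc
        · exact hx (hcl y x _ hy (by rw [← G.symm]; exact h) (Or.inl rfl))
        · exact hx (hcl y x _ hy (by rw [← G.symm]; exact h) (Or.inr rfl))
      simp [Option.map, sw_other c d k hk.1 hk.2]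
  · rw [if_neg (by tauto)]

noncomputable def flip_col (G : Col E N) {c d : ℕ} (hcd : c ≠ d) (hc : c < N) (hd : d < N)
    {K : Set α}
    (hcl : ∀ x y k, x ∈ K → G.f x y = some k → (k = c ∨ k = d) → y ∈ K) : Col E N where
  f := flip c d K G.f
  symm := by
    intro a b; unfold flip
    by_cases h : a ∈ K ∨ b ∈ K
    · rw [if_pos h, if_pos (by tauto), G.symm]
    · rw [if_neg h, if_neg (by tauto), G.symm]
  diag := by
    intro a; unfold flip
    by_cases h : a ∈ K ∨ a ∈ K <;> simp [h, G.diag]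
  lt := by
    intro a b k h
    unfold flip at h
    split at h
    · rcases hab : G.f a b with _ | k'
      · rw [hab] at h; exact absurd h (by simp)
      · rw [hab] at h
        simp only [Option.map_some] at h
        have hk : k = sw c d k' := (Option.some.injEq _ _).mp h.symm
        subst hk
        have := G.lt a b k' hab
        unfold sw; split
        · exact hd
        split
        · exact hc
        · exact this
    · exact G.lt a b k h
  proper := by
    intro a b b' k h1 h2
    by_cases ha : a ∈ K
    · rw [flip_mem G c d K ha] at h1 h2
      rcases hab : G.f a b with _ | k1 <;> rw [hab] at h1
      · exact absurd h1 (by simp)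
      rcases hab' : G.f a b' with _ | k2 <;> rw [hab'] at h2
      · exact absurd h2 (by simp)
      simp only [Option.map_some] at h1 h2
      have e1 : sw c d k1 = k := (Option.some.injEq _ _).mp h1
      have e2 : sw c d k2 = k := (Option.some.injEq _ _).mp h2
      have hk12 : k1 = k2 := by
        have := congrArg (sw c d) (e1.trans e2.symm)
        rwa [sw_invol c d hcd, sw_invol c d hcd] at this
      exact G.proper a b b' k1 hab (hk12 ▸ hab')
    · rw [flip_not_mem G hcl ha] at h1 h2
      exact G.proper a b b' k h1 h2
  supp := by
    intro a b h
    apply G.supp a b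
    intro hn
    unfold flip at h
    rw [hn] at h
    split at h <;> simp at h

@[simp] lemma flip_col_f (G : Col E N) {c d : ℕ} (hcd : c ≠ d) (hc : c < N) (hd : d < N)
    {K : Set α} (hcl : ∀ x y k, x ∈ K → G.f x y = some k → (k = c ∨ k = d) → y ∈ K) :
    (flip_col G hcd hc hd hcl).f = flip c d K G.f := rfl

lemma flip_some (G : Col E N) (c d : ℕ) (K : Set α) (a b : α) :
    (flip c d K G.f a b ≠ none) ↔ (G.f a b ≠ none) := by
  unfold flip; split
  · rcases G.f a b with _|k <;> simp
  · rfl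

lemma usedP_flip_mem (G : Col E N) {c d : ℕ} (hcd : c ≠ d) (K : Set α) {x : α}
    (hx : x ∈ K) (k : ℕ) :
    usedP (flip c d K G.f) x k ↔ usedP G.f x (sw c d k) := by
  unfold usedP
  constructor
  · rintro ⟨y, hy⟩
    rw [flip_mem G c d K hx] at hy
    rcases h : G.f x y with _|k' <;> rw [h] at hy
    · exact absurd hy (by simp)
    · refine ⟨y, ?_⟩
      simp only [Option.map_some] at hy
      have hk' : sw c d k' = k := (Option.some.injEq _ _).mp hy
      rw [h, ← hk', sw_invol c d hcd]
  · rintro ⟨y, hy⟩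
    refine ⟨y, ?_⟩
    rw [flip_mem G c d K hx, hy]
    simp [sw_invol c d hcd]

lemma usedP_flip_not_mem (G : Col E N) {c d : ℕ} {K : Set α}
    (hcl : ∀ x y k, x ∈ K → G.f x y = some k → (k = c ∨ k = d) → y ∈ K)
    {x : α} (hx : x ∉ K) (k : ℕ) :
    usedP (flip c d K G.f) x k ↔ usedP G.f x k := by
  unfold usedP
  constructor <;> rintro ⟨y, hy⟩ <;> refine ⟨y, ?_⟩
  · rwa [flip_not_mem G hcl hx] at hy
  · rwa [flip_not_mem G hcl hx]


/-! ### Reachability in the `c,d`-subgraph -/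

def step (g : α → α → Option ℕ) (c d : ℕ) (x y : α) : Prop :=
  ∃ k, (k = c ∨ k = d) ∧ g x y = some k

def Reach (g : α → α → Option ℕ) (c d : ℕ) (x y : α) : Prop :=
  Relation.ReflTransGen (step g c d) x y

lemma reach_symm {g : α → α → Option ℕ} (hsym : ∀ a b, g a b = g b a) {c d : ℕ} {x y : α}
    (h : Reach g c d x y) : Reach g c d y x := by
  induction h with
  | refl => exact Relation.ReflTransGen.refl
  | tail hstep hlast ih =>
      rcases hlast with ⟨k, hk, hg⟩
      exact Relation.ReflTransGen.trans
        (Relation.ReflTransGen.single ⟨k, hk, by rwa [hsym]⟩) ih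

lemma reach_closed {g : α → α → Option ℕ} {c d : ℕ} {z x y : α} {k : ℕ}
    (h : Reach g c d z x) (hk : k = c ∨ k = d) (hg : g x y = some k) : Reach g c d z y :=
  Relation.ReflTransGen.tail h ⟨k, hk, hg⟩

/-! ### Alternating trails -/

def col (c d : ℕ) (i : ℕ) : ℕ := if i % 2 = 0 then d else c

lemma col_pair (c d i : ℕ) :
    (col c d i = d ∧ col c d (i+1) = c) ∨ (col c d i = c ∧ col c d (i+1) = d) := by
  rcases Nat.mod_two_eq_zero_or_one i with h | h
  · have h2 : (i+1) % 2 = 1 := by omega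
    left; constructor <;> simp [col, h, h2]
  · have h2 : (i+1) % 2 = 0 := by omega
    right; constructor <;> simp [col, h, h2]

lemma col_mem (c d i : ℕ) : col c d i = c ∨ col c d i = d := by
  unfold col; split
  · right; rfl
  · left; rfl

lemma col_ne {c d : ℕ} (hcd : c ≠ d) (i : ℕ) : col c d i ≠ col c d (i+1) := by
  rcases col_pair c d i with ⟨h1, h2⟩ | ⟨h1, h2⟩ <;> rw [h1, h2]
  · exact fun h => hcd h.symm
  · exact hcd

lemma col_zero (c d : ℕ) : col c d 0 = d := by simp [col]

noncomputable def nxt (g : α → α → Option ℕ) (t : ℕ) (x : α) : Option α :=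
  if h : ∃ y, g x y = some t then some h.choose else none

lemma nxt_eq_some {g : α → α → Option ℕ} {t : ℕ} {x y : α} (h : nxt g t x = some y) :
    g x y = some t := by
  unfold nxt at h
  split at h
  · next hex =>
      rw [← (Option.some.injEq _ _).mp h]
      exact hex.choose_spec
  · exact absurd h (by simp)

lemma nxt_eq_some' (G : Col E N) {t : ℕ} {x y : α} (hy : G.f x y = some t) :
    nxt G.f t x = some y := by
  unfold nxt
  have h : ∃ y, G.f x y = some t := ⟨y, hy⟩
  rw [dif_pos h]
  exact congrArg some (G.proper x h.choose y t h.choose_spec hy)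

noncomputable def trail (g : α → α → Option ℕ) (c d : ℕ) (u : α) : ℕ → Option α
  | 0 => some u
  | i+1 => (trail g c d u i).bind (nxt g (col c d i))

lemma trail_zero (g : α → α → Option ℕ) (c d : ℕ) (u : α) : trail g c d u 0 = some u := rfl

lemma trail_succ_some {g : α → α → Option ℕ} {c d : ℕ} {u : α} {i : ℕ} {b : α}
    (h : trail g c d u (i+1) = some b) :
    ∃ a, trail g c d u i = some a ∧ g a b = some (col c d i) := by
  rw [trail] at h
  rcases Option.bind_eq_some_iff.mp h with ⟨a, ha, hnx⟩
  exact ⟨a, ha, nxt_eq_some hnx⟩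

lemma trail_succ_of (G : Col E N) {c d : ℕ} {u : α} {i : ℕ} {a b : α}
    (ha : trail G.f c d u i = some a) (hb : G.f a b = some (col c d i)) :
    trail G.f c d u (i+1) = some b := by
  rw [trail, ha, Option.bind_some]
  exact nxt_eq_some' G hb

lemma trail_none_mono {g : α → α → Option ℕ} {c d : ℕ} {u : α} {i : ℕ}
    (h : trail g c d u i = none) : ∀ j, i ≤ j → trail g c d u j = none := by
  intro j hij
  induction j, hij using Nat.le_induction with
  | base => exact h
  | succ j hij ih => rw [trail, ih]; rfl

lemma trail_inj (G : Col E N) {c d : ℕ} (hcd : c ≠ d) {u : α} (hu : ¬ usedP G.f u c) :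
    ∀ j i a, i < j → trail G.f c d u i = some a → trail G.f c d u j = some a → False := by
  intro j
  induction j using Nat.strong_induction_on with
  | _ j IH =>
  intro i a hij h1 h2
  obtain ⟨j', rfl⟩ : ∃ j', j = j' + 1 := ⟨j - 1, by omega⟩
  obtain ⟨p, hp, hpe⟩ := trail_succ_some h2
  rcases Nat.eq_zero_or_pos i with hi0 | hipos
  · subst hi0
    have hau : a = u := by
      have h0 : (some u : Option α) = some a := h1
      exact ((Option.some.injEq _ _).mp h0).symm
    rw [hau] at hpe h2
    rcases col_mem c d j' with hcol | hcol
    · exact hu ⟨p, by rw [G.symm, hpe, hcol]⟩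
    · -- col j' = d
      have h1' : trail G.f c d u 1 = some p := by
        apply trail_succ_of G (trail_zero G.f c d u)
        rw [G.symm, hpe, hcol, col_zero]
      rcases Nat.eq_zero_or_pos j' with hj0 | hjpos
      · subst hj0
        have hpu : p = u := ((Option.some.injEq _ _).mp (hp : (some u : Option α) = some p)).symm
        rw [hpu, G.diag] at hpe
        exact absurd hpe (by simp)
      · rcases Nat.lt_or_ge 1 j' with hj1 | hj1
        · exact IH j' (by omega) 1 p hj1 h1' hp
        · -- j' = 1 : col 1 = c but hcol : col 1 = d
          have hj'1 : j' = 1 := by omega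
          subst hj'1
          have : col c d 1 = c := by simp [col]
          exact hcd (this.symm.trans hcol)
  · obtain ⟨i', rfl⟩ : ∃ i', i = i' + 1 := ⟨i - 1, by omega⟩
    obtain ⟨q, hq, hqe⟩ := trail_succ_some h1
    have hcolcase : col c d j' = col c d i' ∨ col c d j' = col c d (i'+1) := by
      rcases col_pair c d i' with ⟨e1, e2⟩ | ⟨e1, e2⟩ <;> rcases col_mem c d j' with f1 | f1
      · right; rw [f1, e2]
      · left; rw [f1, e1]
      · left; rw [f1, e1]
      · right; rw [f1, e2]
    rcases hcolcase with hsame | hnext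
    · have hpq : p = q := by
        apply G.proper a p q (col c d i')
        · rw [G.symm, hpe, hsame]
        · rw [G.symm, hqe]
      subst hpq
      exact IH j' (by omega) i' p (by omega) hq hp
    · have hpstep : trail G.f c d u (i'+1+1) = some p := by
        apply trail_succ_of G h1
        rw [G.symm, hpe, hnext]
      rcases Nat.lt_trichotomy (i'+2) j' with hlt | heq | hgt
      · exact IH j' (by omega) (i'+2) p hlt hpstep hp
      · subst heq
        exact col_ne hcd (i'+1) hnext.symm
      · have hj'eq : j' = i' + 1 := by omega
        subst hj'eq
        have hpa : p = a := by
          rw [h1] at hp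
          exact ((Option.some.injEq _ _).mp hp).symm
        rw [hpa, G.diag] at hpe
        exact absurd hpe (by simp)

lemma trail_closed (G : Col E N) {c d : ℕ} (hcd : c ≠ d) {u : α} (hu : ¬ usedP G.f u c)
    {i : ℕ} {z w : α} {k : ℕ} (hz : trail G.f c d u i = some z)
    (hk : k = c ∨ k = d) (hg : G.f z w = some k) :
    ∃ i', trail G.f c d u i' = some w := by
  by_cases hki : k = col c d i
  · exact ⟨i+1, trail_succ_of G hz (hki ▸ hg)⟩
  · rcases Nat.eq_zero_or_pos i with h0 | hpos
    · subst h0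
      have hz' : z = u := ((Option.some.injEq _ _).mp (hz : (some u : Option α) = some z)).symm
      subst hz'
      have hkc : k = c := by
        rcases hk with h | h
        · exact h
        · exact absurd (h.trans (col_zero c d).symm) hki
      exact absurd ⟨w, hkc ▸ hg⟩ hu
    · obtain ⟨i', rfl⟩ : ∃ i', i = i' + 1 := ⟨i - 1, by omega⟩
      obtain ⟨q, hq, hqe⟩ := trail_succ_some hz
      have hki' : k = col c d i' := by
        rcases col_pair c d i' with ⟨e1, e2⟩ | ⟨e1, e2⟩ <;> rcases hk with h | h
        · exact absurd (h.trans e2.symm) hki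
        · rw [h, e1]
        · rw [h, e1]
        · exact absurd (h.trans e2.symm) hki
      have hwq : w = q := by
        apply G.proper z w q (col c d i')
        · rw [← hki']; exact hg
        · rw [G.symm, hqe]
      exact ⟨i', hwq ▸ hq⟩

lemma reach_sub_trail (G : Col E N) {c d : ℕ} (hcd : c ≠ d) {u : α} (hu : ¬ usedP G.f u c)
    {z : α} (h : Reach G.f c d u z) : ∃ i, trail G.f c d u i = some z := by
  induction h with
  | refl => exact ⟨0, rfl⟩
  | tail hr hstep ih =>
      rcases ih with ⟨i, hi⟩
      rcases hstep with ⟨k, hk, hg⟩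
      exact trail_closed G hcd hu hi hk hg

lemma trail_terminal (G : Col E N) {c d : ℕ} (hcd : c ≠ d) {u x : α}
    (hu : ¬ usedP G.f u c) (hx : ¬ usedP G.f x d) (hxu : x ≠ u)
    {i : ℕ} (hi : trail G.f c d u i = some x) : trail G.f c d u (i+1) = none := by
  rcases Nat.eq_zero_or_pos i with h0 | hpos
  · subst h0
    exact absurd ((Option.some.injEq _ _).mp (hi : (some u : Option α) = some x)) (fun h => hxu h.symm)
  · obtain ⟨i', rfl⟩ : ∃ i', i = i' + 1 := ⟨i - 1, by omega⟩
    obtain ⟨q, hq, hqe⟩ := trail_succ_some hi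
    have hcolc : col c d i' = c := by
      rcases col_mem c d i' with h | h
      · exact h
      · exact absurd ⟨q, by rw [G.symm, hqe, h]⟩ hx
    have hcold : col c d (i'+1) = d := by
      rcases col_pair c d i' with ⟨e1, e2⟩ | ⟨e1, e2⟩
      · exact absurd (hcolc.symm.trans e1) hcd
      · exact e2
    rcases htr : trail G.f c d u (i'+1+1) with _ | w
    · rfl
    · exfalso
      obtain ⟨a, ha, he⟩ := trail_succ_some htr
      have hax : a = x := by
        rw [hi] at ha
        exact ((Option.some.injEq _ _).mp ha).symm
      subst hax
      exact hx ⟨w, by rw [he, hcold]⟩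

lemma three_endpoints (G : Col E N) {c d : ℕ} (hcd : c ≠ d) {u x y : α}
    (hu : ¬ usedP G.f u c) (hx : ¬ usedP G.f x d) (hy : ¬ usedP G.f y d)
    (hxu : x ≠ u) (hyu : y ≠ u) (hxy : x ≠ y)
    (hrx : Reach G.f c d u x) (hry : Reach G.f c d u y) : False := by
  obtain ⟨i, hi⟩ := reach_sub_trail G hcd hu hrx
  obtain ⟨j, hj⟩ := reach_sub_trail G hcd hu hry
  have hij : i ≠ j := by
    intro h
    subst h
    rw [hi] at hj
    exact hxy ((Option.some.injEq _ _).mp hj)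
  have hti := trail_terminal G hcd hu hx hxu hi
  have htj := trail_terminal G hcd hu hy hyu hj
  rcases Nat.lt_or_ge i j with h | h
  · rw [trail_none_mono hti j (by omega)] at hj
    exact absurd hj (by simp)
  · rw [trail_none_mono htj i (by omega)] at hi
    exact absurd hi (by simp)

/-! ### Fan rotation -/

noncomputable def nc (g : α → α → Option ℕ) (u : α) (v : ℕ → α) (m t : ℕ) (x : α) : Option ℕ :=
  if h : ∃ i, i ≤ m ∧ x = v i then
    (if h.choose < m then g u (v (h.choose + 1)) else some t)
  else g u x

noncomputable def rot (g : α → α → Option ℕ) (u : α) (v : ℕ → α) (m t : ℕ) (x y : α) :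
    Option ℕ :=
  if x = u then nc g u v m t y else if y = u then nc g u v m t x else g x y

lemma nc_fan {g : α → α → Option ℕ} {u : α} {v : ℕ → α} {m t : ℕ}
    (hinj : ∀ i, i ≤ m → ∀ j, j ≤ m → v i = v j → i = j) {j : ℕ} (hj : j ≤ m) :
    nc g u v m t (v j) = if j < m then g u (v (j+1)) else some t := by
  unfold nc
  have h : ∃ i, i ≤ m ∧ v j = v i := ⟨j, hj, rfl⟩
  rw [dif_pos h]
  have hs := h.choose_spec
  have hje : h.choose = j := hinj _ hs.1 _ hj hs.2.symm
  rw [hje]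

lemma nc_not_fan {g : α → α → Option ℕ} {u : α} {v : ℕ → α} {m t : ℕ} {x : α}
    (h : ¬ ∃ i, i ≤ m ∧ x = v i) : nc g u v m t x = g u x := dif_neg h

lemma rot_col (G : Col E N) (u : α) (v : ℕ → α) (m t : ℕ)
    (hinj : ∀ i, i ≤ m → ∀ j, j ≤ m → v i = v j → i = j)
    (hvu : ∀ i, i ≤ m → v i ≠ u)
    (hvE : ∀ i, i ≤ m → s(u, v i) ∈ E)
    (hfan : ∀ i, i < m → ∃ k, G.f u (v (i+1)) = some k ∧ ¬ usedP G.f (v i) k)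
    (htN : t < N) (htu : ¬ usedP G.f u t) (htm : ¬ usedP G.f (v m) t) :
    ∃ G' : Col E N, (∀ a b, G.f a b ≠ none → G'.f a b ≠ none) ∧ G'.f u (v 0) ≠ none := by
  have hunf : ¬ ∃ i, i ≤ m ∧ u = v i := by
    rintro ⟨i, hi, he⟩
    exact hvu i hi he.symm
  have hnc_some : ∀ x, (∃ i, i ≤ m ∧ x = v i) → nc G.f u v m t x ≠ none := by
    rintro x ⟨i, hi, rfl⟩
    rw [nc_fan hinj hi]
    split
    · next hlt =>
        obtain ⟨k, hk, -⟩ := hfan i hlt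
        simp [hk]
    · simp
  -- key fact: a fan value at `x` is never a colour already present at `x` (for x ≠ u)
  have hkey : ∀ (x w : α) (k : ℕ), w ≠ u → nc G.f u v m t x = some k →
      G.f x w = some k → False := by
    intro x w k hw h1 h2
    by_cases hx : ∃ i, i ≤ m ∧ x = v i
    · obtain ⟨i, hi, rfl⟩ := hx
      rw [nc_fan hinj hi] at h1
      split at h1
      · next hlt =>
          obtain ⟨k0, hk0, hfree⟩ := hfan i hlt
          rw [hk0] at h1
          have : k0 = k := (Option.some.injEq _ _).mp h1
          exact hfree ⟨w, this ▸ h2⟩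
      · next hge =>
          have him : i = m := by omega
          have hkt : k = t := ((Option.some.injEq _ _).mp h1).symm
          exact htm ⟨w, by rw [← him, h2, hkt]⟩
    · rw [nc_not_fan hx] at h1
      have h1' : G.f x u = some k := by rw [G.symm]; exact h1
      exact hw (G.proper x w u k h2 h1')
  refine ⟨⟨rot G.f u v m t, ?_, ?_, ?_, ?_, ?_⟩, ?_, ?_⟩
  · -- symm
    intro a b
    unfold rot
    by_cases ha : a = u <;> by_cases hb : b = u
    · rw [if_pos ha, if_pos hb, ha, hb]
    · rw [if_pos ha, if_neg hb, if_pos ha]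
    · rw [if_neg ha, if_pos hb, if_pos hb]
    · rw [if_neg ha, if_neg hb, if_neg hb, if_neg ha, G.symm]
  · -- diag
    intro a
    unfold rot
    by_cases ha : a = u
    · rw [if_pos ha, ha, nc_not_fan hunf, G.diag]
    · rw [if_neg ha, if_neg ha, G.diag]
  · -- lt
    have hnc_lt : ∀ x k, nc G.f u v m t x = some k → k < N := by
      intro x k h
      by_cases hx : ∃ i, i ≤ m ∧ x = v i
      · obtain ⟨i, hi, rfl⟩ := hx
        rw [nc_fan hinj hi] at h
        split at h
        · exact G.lt _ _ _ h
        · rwa [← (Option.some.injEq _ _).mp h]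
      · rw [nc_not_fan hx] at h
        exact G.lt _ _ _ h
    intro a b k h
    unfold rot at h
    split at h
    · exact hnc_lt _ _ h
    split at h
    · exact hnc_lt _ _ h
    · exact G.lt _ _ _ h
  · -- proper
    intro a b b' k h1 h2
    unfold rot at h1 h2
    by_cases ha : a = u
    · rw [if_pos ha] at h1 h2
      by_cases hb : ∃ i, i ≤ m ∧ b = v i <;> by_cases hb' : ∃ i, i ≤ m ∧ b' = v i
      · obtain ⟨i, hi, rfl⟩ := hb
        obtain ⟨i', hi', rfl⟩ := hb'
        rw [nc_fan hinj hi] at h1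
        rw [nc_fan hinj hi'] at h2
        split at h1 <;> split at h2
        · next hlt hlt' =>
            have := G.proper u (v (i+1)) (v (i'+1)) k h1 h2
            have : i + 1 = i' + 1 := hinj _ (by omega) _ (by omega) this
            have : i = i' := by omega
            rw [this]
        · next hlt hge =>
            exfalso
            have hkt : k = t := ((Option.some.injEq _ _).mp h2).symm
            exact htu ⟨v (i+1), by rw [h1, hkt]⟩
        · next hge hlt =>
            exfalso
            have hkt : k = t := ((Option.some.injEq _ _).mp h1).symm
            exact htu ⟨v (i'+1), by rw [h2, hkt]⟩
        · next hge hge' =>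
            have : i = m := by omega
            have h' : i' = m := by omega
            rw [this, h']
      · exfalso
        obtain ⟨i, hi, rfl⟩ := hb
        rw [nc_fan hinj hi] at h1
        rw [nc_not_fan hb'] at h2
        split at h1
        · next hlt =>
            have := G.proper u (v (i+1)) b' k h1 h2
            exact hb' ⟨i+1, by omega, this.symm⟩
        · next hge =>
            have hkt : k = t := ((Option.some.injEq _ _).mp h1).symm
            exact htu ⟨b', by rw [h2, hkt]⟩
      · exfalso
        obtain ⟨i, hi, rfl⟩ := hb'
        rw [nc_fan hinj hi] at h2
        rw [nc_not_fan hb] at h1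
        split at h2
        · next hlt =>
            have := G.proper u (v (i+1)) b k h2 h1
            exact hb ⟨i+1, by omega, this.symm⟩
        · next hge =>
            have hkt : k = t := ((Option.some.injEq _ _).mp h2).symm
            exact htu ⟨b, by rw [h1, hkt]⟩
      · rw [nc_not_fan hb] at h1
        rw [nc_not_fan hb'] at h2
        exact G.proper u b b' k h1 h2
    · rw [if_neg ha] at h1 h2
      by_cases hb : b = u <;> by_cases hb' : b' = u
      · rw [hb, hb']
      · rw [if_pos hb] at h1
        rw [if_neg hb'] at h2
        exact (hkey a b' k hb' h1 h2).elim
      · rw [if_neg hb] at h1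
        rw [if_pos hb'] at h2
        exact (hkey a b k hb h2 h1).elim
      · rw [if_neg hb] at h1
        rw [if_neg hb'] at h2
        exact G.proper a b b' k h1 h2
  · -- supp
    have hnc_supp : ∀ x, nc G.f u v m t x ≠ none → s(u, x) ∈ E := by
      intro x h
      by_cases hx : ∃ i, i ≤ m ∧ x = v i
      · obtain ⟨i, hi, rfl⟩ := hx
        exact hvE i hi
      · rw [nc_not_fan hx] at h
        exact G.supp u x h
    intro a b h
    unfold rot at h
    split at h
    · next he => rw [he]; exact hnc_supp b h
    split at h
    · next he =>
        rw [he, Sym2.eq_swap]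
        exact hnc_supp a h
    · exact G.supp a b h
  · -- someness preserved
    intro a b h
    show rot G.f u v m t a b ≠ none
    unfold rot
    split
    · next he =>
        by_cases hb : ∃ i, i ≤ m ∧ b = v i
        · exact hnc_some b hb
        · rw [nc_not_fan hb, ← he]; exact h
    split
    · next he =>
        by_cases hb : ∃ i, i ≤ m ∧ a = v i
        · exact hnc_some a hb
        · rw [nc_not_fan hb]
          rw [G.symm, ← he]
          exact h
    · exact h
  · -- u - v 0 is coloured
    show rot G.f u v m t u (v 0) ≠ none
    unfold rot
    rw [if_pos rfl]
    exact hnc_some (v 0) ⟨0, by omega, rfl⟩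

/-! ### The extension step (Vizing fans) -/

lemma fan_rec (E : Finset (Sym2 α)) (C : ℕ)
    (hdeg : ∀ x : α, (E.filter (fun e => x ∈ e)).card ≤ C)
    (G : Col E (C+1)) (u v₀ : α) (h0 : G.f u v₀ = none) :
    ∀ (fuel : ℕ) (v : ℕ → α) (m : ℕ), Fintype.card α ≤ fuel + (m + 1) →
    (∀ i, i ≤ m → ∀ j, j ≤ m → v i = v j → i = j) →
    (∀ i, i ≤ m → v i ≠ u) →
    (∀ i, i ≤ m → s(u, v i) ∈ E) →
    v 0 = v₀ →
    (∀ i, i < m → ∃ k, G.f u (v (i+1)) = some k ∧ ¬ usedP G.f (v i) k) →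
    ∃ G' : Col E (C+1), (∀ a b, G.f a b ≠ none → G'.f a b ≠ none) ∧ G'.f u v₀ ≠ none := by
  intro fuel
  induction fuel using Nat.strong_induction_on with
  | _ fuel IH =>
  intro v m hcard hinj hvu hvE hv0 hfan
  obtain ⟨d, hdN, hdfree⟩ := exists_free G hdeg (by omega) (v m)
  by_cases hdu : usedP G.f u d
  case neg =>
    obtain ⟨G', hpres, hcol⟩ := rot_col G u v m d hinj hvu hvE hfan hdN hdu hdfree
    exact ⟨G', hpres, hv0 ▸ hcol⟩
  case pos =>
    obtain ⟨w, hw⟩ := hdu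
    have hwu : w ≠ u := by
      intro h
      rw [h, G.diag] at hw
      exact absurd hw (by simp)
    by_cases hwf : ∃ j, j ≤ m ∧ w = v j
    case neg =>
      -- extend the fan by w
      have hm1 : m + 1 + 1 ≤ Fintype.card α := by
        have hinj2 : Function.Injective
            (fun i : Fin (m+2) => if (i : ℕ) = m+1 then w else v i) := by
          intro i j hij
          dsimp only at hij
          by_cases hi : (i : ℕ) = m+1 <;> by_cases hj : (j : ℕ) = m+1
          · exact Fin.ext (by omega)
          · rw [if_pos hi, if_neg hj] at hij
            exact absurd ⟨(j : ℕ), by omega, hij⟩ hwf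
          · rw [if_neg hi, if_pos hj] at hij
            exact absurd ⟨(i : ℕ), by omega, hij.symm⟩ hwf
          · rw [if_neg hi, if_neg hj] at hij
            exact Fin.ext (hinj i (by omega) j (by omega) hij)
        calc m + 1 + 1 = Fintype.card (Fin (m+2)) := by simp
          _ ≤ Fintype.card α := Fintype.card_le_of_injective _ hinj2
      obtain ⟨fuel', rfl⟩ : ∃ f', fuel = f' + 1 := ⟨fuel - 1, by omega⟩
      apply IH fuel' (by omega) (fun i => if i = m+1 then w else v i) (m+1) (by omega)
      · intro i hi j hj hij
        by_cases hi' : i = m+1 <;> by_cases hj' : j = m+1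
        · omega
        · rw [if_pos hi', if_neg hj'] at hij
          exact absurd ⟨j, by omega, hij⟩ hwf
        · rw [if_neg hi', if_pos hj'] at hij
          exact absurd ⟨i, by omega, hij.symm⟩ hwf
        · rw [if_neg hi', if_neg hj'] at hij
          exact hinj i (by omega) j (by omega) hij
      · intro i hi
        by_cases hi' : i = m+1
        · rw [if_pos hi']; exact hwu
        · rw [if_neg hi']; exact hvu i (by omega)
      · intro i hi
        by_cases hi' : i = m+1
        · rw [if_pos hi']
          exact G.supp u w (by rw [hw]; simp)
        · rw [if_neg hi']; exact hvE i (by omega)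
      · rw [if_neg (by omega : ¬(0:ℕ) = m+1)]
        exact hv0
      · intro i hi
        by_cases hi' : i + 1 = m + 1
        · have him : i = m := by omega
          subst him
          rw [if_pos hi', if_neg (by omega : ¬ i = i+1)]
          exact ⟨d, hw, hdfree⟩
        · rw [if_neg hi', if_neg (by omega : ¬ i = m+1)]
          exact hfan i (by omega)
    case pos =>
      obtain ⟨j, hjm, hwj⟩ := hwf
      have hj1 : 1 ≤ j := by
        rcases Nat.eq_zero_or_pos j with hj0 | h
        · exfalso
          rw [hj0, hv0] at hwj
          rw [hwj, h0] at hw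
          exact absurd hw (by simp)
        · exact h
      obtain ⟨j', rfl⟩ : ∃ j', j = j' + 1 := ⟨j - 1, by omega⟩
      have hj'm : j' < m := by
        rcases Nat.lt_or_ge j' m with h | h
        · exact h
        · exfalso
          have hjm' : j' + 1 = m := by omega
          rw [hjm'] at hwj
          exact hdfree ⟨u, by rw [G.symm, ← hwj, hw]⟩
      obtain ⟨c, hcN, hcfree⟩ := exists_free G hdeg (by omega) u
      have hcd : c ≠ d := fun h => hcfree (h ▸ ⟨w, hw⟩)
      have hdj' : ¬ usedP G.f (v j') d := by
        obtain ⟨k, hk, hfree⟩ := hfan j' hj'm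
        have hkd : k = d := by
          rw [← hwj, hw] at hk
          exact ((Option.some.injEq _ _).mp hk).symm
        exact hkd ▸ hfree
      -- a fan colour k (at position i+1, i < m) is never c; it is d only for i = j'
      have hknotc : ∀ i, i < m → ∀ k, G.f u (v (i+1)) = some k → k ≠ c :=
        fun i hi k hk hkc => hcfree ⟨v (i+1), hkc ▸ hk⟩
      have hkd_iff : ∀ i, i < m → ∀ k, G.f u (v (i+1)) = some k → k = d → i = j' := by
        intro i hi k hk hkd
        subst hkd
        have hvw : v (i+1) = w := G.proper u (v (i+1)) w k hk hw
        rw [hwj] at hvw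
        have := hinj (i+1) (by omega) (j'+1) (by omega) hvw
        omega
      by_cases hR : Reach G.f c d u (v j')
      case neg =>
        -- flip the component of v j', rotate the prefix 0..j' and colour u-(v j') with c
        have hcl : ∀ x y k, x ∈ ({z | Reach G.f c d (v j') z} : Set α) →
            G.f x y = some k → (k = c ∨ k = d) → y ∈ ({z | Reach G.f c d (v j') z} : Set α) :=
          fun x y k hx hg hk => reach_closed hx hk hg
        have huK : u ∉ ({z | Reach G.f c d (v j') z} : Set α) :=
          fun h => hR (reach_symm G.symm h)
        set G₁ : Col E (C+1) := flip_col G hcd hcN hdN hcl with hG₁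
        have hG₁u : ∀ y, G₁.f u y = G.f u y := flip_not_mem G hcl huK
        have hfan1 : ∀ i, i < j' → ∃ k, G₁.f u (v (i+1)) = some k ∧ ¬ usedP G₁.f (v i) k := by
          intro i hi
          obtain ⟨k, hk, hfree⟩ := hfan i (by omega)
          refine ⟨k, by rw [hG₁u]; exact hk, ?_⟩
          have hknc : k ≠ c := hknotc i (by omega) k hk
          have hknd : k ≠ d := fun h => by
            have := hkd_iff i (by omega) k hk h
            omega
          by_cases hvK : v i ∈ ({z | Reach G.f c d (v j') z} : Set α)
          · rw [hG₁, flip_col_f, usedP_flip_mem G hcd _ hvK, sw_other c d k hknc hknd]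
            exact hfree
          · rw [hG₁, flip_col_f, usedP_flip_not_mem G hcl hvK]
            exact hfree
        have htu1 : ¬ usedP G₁.f u c := by
          rw [hG₁, flip_col_f, usedP_flip_not_mem G hcl huK]
          exact hcfree
        have htm1 : ¬ usedP G₁.f (v j') c := by
          have hmem : v j' ∈ ({z | Reach G.f c d (v j') z} : Set α) :=
            Relation.ReflTransGen.refl
          rw [hG₁, flip_col_f, usedP_flip_mem G hcd _ hmem, sw_c]
          exact hdj'
        obtain ⟨G', hpres, hcol⟩ := rot_col G₁ u v j' c
          (fun i hi j hj => hinj i (by omega) j (by omega))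
          (fun i hi => hvu i (by omega))
          (fun i hi => hvE i (by omega))
          hfan1 hcN htu1 htm1
        refine ⟨G', ?_, hv0 ▸ hcol⟩
        intro a b h
        apply hpres a b
        rw [hG₁, flip_col_f]
        exact (flip_some G c d _ a b).mpr h
      case pos =>
        have hRm : ¬ Reach G.f c d u (v m) := by
          intro hmm
          refine three_endpoints G hcd hcfree hdj' hdfree
            (hvu j' (by omega)) (hvu m (by omega)) ?_ hR hmm
          intro h
          have := hinj j' (by omega) m (by omega) h
          omega
        have hcl : ∀ x y k, x ∈ ({z | Reach G.f c d (v m) z} : Set α) →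
            G.f x y = some k → (k = c ∨ k = d) → y ∈ ({z | Reach G.f c d (v m) z} : Set α) :=
          fun x y k hx hg hk => reach_closed hx hk hg
        have huK : u ∉ ({z | Reach G.f c d (v m) z} : Set α) :=
          fun h => hRm (reach_symm G.symm h)
        have hvj'K : v j' ∉ ({z | Reach G.f c d (v m) z} : Set α) := by
          intro h
          exact hRm (Relation.ReflTransGen.trans hR (reach_symm G.symm h))
        set G₁ : Col E (C+1) := flip_col G hcd hcN hdN hcl with hG₁
        have hG₁u : ∀ y, G₁.f u y = G.f u y := flip_not_mem G hcl huK
        have hfan1 : ∀ i, i < m → ∃ k, G₁.f u (v (i+1)) = some k ∧ ¬ usedP G₁.f (v i) k := by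
          intro i hi
          obtain ⟨k, hk, hfree⟩ := hfan i hi
          refine ⟨k, by rw [hG₁u]; exact hk, ?_⟩
          have hknc : k ≠ c := hknotc i hi k hk
          by_cases hvK : v i ∈ ({z | Reach G.f c d (v m) z} : Set α)
          · have hknd : k ≠ d := by
              intro h
              have hij' : i = j' := hkd_iff i hi k hk h
              rw [hij'] at hvK
              exact hvj'K hvK
            rw [hG₁, flip_col_f, usedP_flip_mem G hcd _ hvK, sw_other c d k hknc hknd]
            exact hfree
          · rw [hG₁, flip_col_f, usedP_flip_not_mem G hcl hvK]
            exact hfree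
        have htu1 : ¬ usedP G₁.f u c := by
          rw [hG₁, flip_col_f, usedP_flip_not_mem G hcl huK]
          exact hcfree
        have htm1 : ¬ usedP G₁.f (v m) c := by
          have hmem : v m ∈ ({z | Reach G.f c d (v m) z} : Set α) :=
            Relation.ReflTransGen.refl
          rw [hG₁, flip_col_f, usedP_flip_mem G hcd _ hmem, sw_c]
          exact hdfree
        obtain ⟨G', hpres, hcol⟩ := rot_col G₁ u v m c hinj hvu hvE hfan1 hcN htu1 htm1
        refine ⟨G', ?_, hv0 ▸ hcol⟩
        intro a b h
        apply hpres a b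
        rw [hG₁, flip_col_f]
        exact (flip_some G c d _ a b).mpr h

lemma extend_col (E : Finset (Sym2 α)) (C : ℕ)
    (hdeg : ∀ x : α, (E.filter (fun e => x ∈ e)).card ≤ C)
    (G : Col E (C+1)) (u v₀ : α) (huv : s(u, v₀) ∈ E) (hne : u ≠ v₀)
    (h0 : G.f u v₀ = none) :
    ∃ G' : Col E (C+1), (∀ a b, G.f a b ≠ none → G'.f a b ≠ none) ∧ G'.f u v₀ ≠ none := by
  apply fan_rec E C hdeg G u v₀ h0 (Fintype.card α) (fun _ => v₀) 0 (by omega)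
  · intro i hi j hj _; omega
  · intro i _; exact hne.symm
  · intro i _; exact huv
  · rfl
  · intro i hi; omega

lemma vizing_col (C : ℕ) :
    ∀ E : Finset (Sym2 α), (∀ e ∈ E, ¬ e.IsDiag) →
    (∀ x : α, (E.filter (fun e => x ∈ e)).card ≤ C) →
    ∃ G : Col E (C+1), ∀ a b, s(a, b) ∈ E → G.f a b ≠ none := by
  intro E
  induction E using Finset.strongInduction with
  | _ E IH =>
  intro hE hdeg
  rcases Finset.eq_empty_or_nonempty E with rfl | ⟨e, he⟩
  · refine ⟨⟨fun _ _ => none, fun _ _ => rfl, fun _ => rfl, ?_, ?_, ?_⟩, ?_⟩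
    · intro a b k h; exact absurd h (by simp)
    · intro a b b' k h _; exact absurd h (by simp)
    · intro a b h; exact absurd rfl h
    · intro a b h; exact absurd h (Finset.notMem_empty _)
  · revert he
    induction e using Sym2.inductionOn with
    | hf u v₀ =>
    intro he
    have hne : u ≠ v₀ := by
      intro h
      exact hE _ he (by rw [h]; exact Sym2.mk_isDiag_iff.mpr rfl)
    have hsub : E.erase s(u, v₀) ⊂ E := Finset.erase_ssubset he
    obtain ⟨G0, hG0⟩ := IH (E.erase s(u, v₀)) hsub
      (fun e' he' => hE e' (Finset.mem_of_mem_erase he'))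
      (fun x => le_trans
        (Finset.card_le_card
          (Finset.filter_subset_filter _ (Finset.erase_subset _ _))) (hdeg x))
    set G : Col E (C+1) :=
      ⟨G0.f, G0.symm, G0.diag, G0.lt, G0.proper,
        fun a b h => Finset.mem_of_mem_erase (G0.supp a b h)⟩ with hG
    have h0 : G0.f u v₀ = none := by
      rcases h : G0.f u v₀ with _ | k
      · rfl
      · exfalso
        have := G0.supp u v₀ (by rw [h]; simp)
        exact (Finset.notMem_erase _ _) this
    obtain ⟨G', hpres, hcol⟩ := extend_col E C hdeg G u v₀ he hne h0
    refine ⟨G', ?_⟩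
    intro a b hab
    by_cases hab' : s(a, b) = s(u, v₀)
    · rcases Sym2.eq_iff.mp hab' with ⟨rfl, rfl⟩ | ⟨rfl, rfl⟩
      · exact hcol
      · rw [G'.symm]; exact hcol
    · exact hpres a b (hG0 a b (Finset.mem_erase.mpr ⟨hab', hab⟩))

end Viz

/-- a `C`-bounded colouring of `K_n` with `q` colours and no two vertex
disjoint colour isomorphic copies of `H` yields a proper colouring with `(C+1)q` colours
and no such pair; in particular `f₂(n,H) ≤ (C+1)q`. -/
theorem statement4 {V : Type} [Fintype V] (H : SimpleGraph V) (n q C : ℕ)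
    (hn : 0 < n) (hq : 0 < q) (hC : 0 < C)
    (χ : Sym2 (Fin n) → Fin q)
    (hbd : IsBoundedColouring χ C)
    (hno : ¬ ∃ φ ψ : V → Fin n, IsColourIsoPair H χ φ ψ) :
    (∃ χ' : Sym2 (Fin n) → Fin ((C + 1) * q), IsProperEdgeColouring χ' ∧
      ¬ ∃ φ ψ : V → Fin n, IsColourIsoPair H χ' φ ψ) ∧
    f2 n H ≤ (C + 1) * q := by
  classical
  have key : ∃ χ' : Sym2 (Fin n) → Fin ((C + 1) * q), IsProperEdgeColouring χ' ∧
      ¬ ∃ φ ψ : V → Fin n, IsColourIsoPair H χ' φ ψ := by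
    set E : Fin q → Finset (Sym2 (Fin n)) :=
      fun cc => Finset.univ.filter (fun e => ¬ e.IsDiag ∧ χ e = cc) with hE
    have hEdiag : ∀ cc, ∀ e ∈ E cc, ¬ e.IsDiag :=
      fun cc e he => ((Finset.mem_filter.mp he).2).1
    have hEdeg : ∀ (cc : Fin q) (x : Fin n), ((E cc).filter (fun e => x ∈ e)).card ≤ C := by
      intro cc x
      refine le_trans (Finset.card_le_card_of_injOn
        (fun e => if h : x ∈ e then Sym2.Mem.other h else x) ?_ ?_) (hbd cc x)
      · intro e hemem
        rw [Finset.mem_coe, Finset.mem_filter] at hemem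
        obtain ⟨heE, hxe⟩ := hemem
        rw [hE, Finset.mem_filter] at heE
        dsimp only
        rw [dif_pos hxe]
        refine Finset.mem_filter.mpr ⟨Finset.mem_univ _, ?_, ?_⟩
        · intro h
          apply heE.2.1
          rw [← Sym2.other_spec hxe, h]
          exact Sym2.mk_isDiag_iff.mpr rfl
        · rw [Sym2.other_spec hxe]
          exact heE.2.2
      · intro e he1 f hf1 heq
        have he1' := Finset.mem_filter.mp (Finset.mem_coe.mp he1)
        have hf1' := Finset.mem_filter.mp (Finset.mem_coe.mp hf1)
        have hxe : x ∈ e := he1'.2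
        have hxf : x ∈ f := hf1'.2
        dsimp only at heq
        rw [dif_pos hxe, dif_pos hxf] at heq
        rw [← Sym2.other_spec hxe, ← Sym2.other_spec hxf, heq]
    have hvz : ∀ cc : Fin q, ∃ G : Viz.Col (E cc) (C+1),
        ∀ a b, s(a,b) ∈ E cc → G.f a b ≠ none :=
      fun cc => Viz.vizing_col C (E cc) (hEdiag cc) (hEdeg cc)
    choose Gc hGc using hvz
    set ρ : Fin q → Sym2 (Fin n) → Option ℕ :=
      fun cc => Sym2.lift ⟨(Gc cc).f, (Gc cc).symm⟩ with hρ
    set r : Sym2 (Fin n) → ℕ := fun e => ((ρ (χ e)) e).getD 0 with hr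
    have hrlt : ∀ e, r e < C + 1 := by
      intro e
      induction e using Sym2.inductionOn with
      | hf a b =>
        rcases h : ρ (χ s(a,b)) s(a,b) with _ | k
        · simp [hr, h]
        · have hk : (Gc (χ s(a,b))).f a b = some k := by
            rw [← h, hρ]
            simp
          have := (Gc _).lt a b k hk
          simp only [hr, h, Option.getD_some]
          exact this
    have hmem : ∀ e, ¬ e.IsDiag → e ∈ E (χ e) :=
      fun e he => Finset.mem_filter.mpr ⟨Finset.mem_univ _, he, rfl⟩
    have hsome : ∀ e, ¬ e.IsDiag → ρ (χ e) e = some (r e) := by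
      intro e he
      induction e using Sym2.inductionOn with
      | hf a b =>
        have hne := hGc (χ s(a,b)) a b (hmem _ he)
        have hl : ρ (χ s(a,b)) s(a,b) = (Gc (χ s(a,b))).f a b := by
          rw [hρ]; simp
        rcases h : (Gc (χ s(a,b))).f a b with _ | k
        · exact absurd h hne
        · rw [hr]
          simp only
          rw [hl, h]
          rfl
    have hbound : ∀ e : Sym2 (Fin n), (C+1) * (χ e).val + r e < (C+1)*q := by
      intro e
      have h1 : (χ e).val < q := (χ e).isLt
      have h2 : r e < C+1 := hrlt e
      calc (C+1) * (χ e).val + r e < (C+1) * (χ e).val + (C+1) := by omega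
        _ = (C+1) * ((χ e).val + 1) := by ring
        _ ≤ (C+1) * q := Nat.mul_le_mul_left _ (by omega)
    set χ' : Sym2 (Fin n) → Fin ((C+1)*q) :=
      fun e => ⟨(C+1) * (χ e).val + r e, hbound e⟩ with hχ'
    have hdiv : ∀ e f : Sym2 (Fin n), χ' e = χ' f → χ e = χ f := by
      intro e f h
      have hv : (C+1) * (χ e).val + r e = (C+1) * (χ f).val + r f :=
        congrArg Fin.val h
      have d1 : ((C+1) * (χ e).val + r e) / (C+1) = (χ e).val := by
        rw [Nat.mul_add_div (by omega), Nat.div_eq_of_lt (hrlt e)]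
        omega
      have d2 : ((C+1) * (χ f).val + r f) / (C+1) = (χ f).val := by
        rw [Nat.mul_add_div (by omega), Nat.div_eq_of_lt (hrlt f)]
        omega
      exact Fin.ext (by rw [← d1, hv, d2])
    have hrr : ∀ e f : Sym2 (Fin n), χ' e = χ' f → r e = r f := by
      intro e f h
      have hv : (C+1) * (χ e).val + r e = (C+1) * (χ f).val + r f :=
        congrArg Fin.val h
      have hval : (χ e).val = (χ f).val := congrArg Fin.val (hdiv e f h)
      rw [hval] at hv
      omega
    refine ⟨χ', ?_, ?_⟩
    · intro e f he hf hef hshare heq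
      obtain ⟨w, hwe, hwf⟩ := hshare
      obtain ⟨x, hx⟩ : ∃ x, e = s(w, x) := ⟨Sym2.Mem.other hwe, (Sym2.other_spec hwe).symm⟩
      obtain ⟨y, hy⟩ : ∃ y, f = s(w, y) := ⟨Sym2.Mem.other hwf, (Sym2.other_spec hwf).symm⟩
      subst hx; subst hy
      have hχef := hdiv _ _ heq
      have hre := hrr _ _ heq
      have hse := hsome _ he
      have hsf := hsome _ hf
      rw [hχef] at hse
      have h1 : (Gc (χ s(w,y))).f w x = some (r s(w,x)) := by
        rw [hρ] at hse
        simpa using hse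
      have h2 : (Gc (χ s(w,y))).f w y = some (r s(w,x)) := by
        rw [hρ] at hsf
        rw [← hre] at hsf
        simpa using hsf
      have hxy : x = y := (Gc (χ s(w,y))).proper w x y (r s(w,x)) h1 h2
      exact hef (by rw [hxy])
    · rintro ⟨φ, ψ, hφ, hψ, hdisj, hcol⟩
      exact hno ⟨φ, ψ, hφ, hψ, hdisj, fun a b hab => hdiv _ _ (hcol a b hab)⟩
  obtain ⟨χ', hp, hnn⟩ := key
  exact ⟨⟨χ', hp, hnn⟩, Nat.sInf_le ⟨χ', hp, hnn⟩⟩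
end

section
/- Let q be a prime power, and let t, d, m be positive integers with d ≥ m − 1. For any m distinct points X_1, …, X_m ∈ F_q^t, the number of polynomials f ∈ P_d(t) satisfying f(X_i) = 0 for every i = 1, …, m equals |P_d(t)| / q^m; equivalently, a uniformly random f ∈ P_d(t) vanishes at all of X_1, …, X_m with probability exactly q^{−m}. -/
/-!
Evaluation at the points `X₁, …, X_m` is an `F`-linear map `P_d(t) → F^m`. It is surjective
as soon as `d ≥ m - 1`: the product over `j ≠ i` of affine forms vanishing at `X_j` and equal
to `1` at `X_i` is a Lagrange basis polynomial of degree `m - 1`. Hence the polynomials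
vanishing at all `X_i`, i.e. the kernel, number `|P_d(t)| / q^m`.
-/

open Finset MvPolynomial

theorem LinearMap.natCard_eq_natCard_ker_mul_of_surjective {R M N : Type*} [Ring R]
    [AddCommGroup M] [Module R M] [AddCommGroup N] [Module R N] {L : M →ₗ[R] N}
    (hL : Function.Surjective L) : Nat.card M = Nat.card (ker L) * Nat.card N := by
  rw [(ker L).card_eq_card_quotient_mul_card,
    Nat.card_congr (L.quotKerEquivOfSurjective hL).toEquiv]

namespace MvPolynomial

variable {σ ι F : Type*} [Field F]

theorem exists_totalDegree_le_one_eval_eq_one_eval_eq_zero {x y : σ → F} (hxy : x ≠ y) :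
    ∃ p : MvPolynomial σ F, p.totalDegree ≤ 1 ∧ eval x p = 1 ∧ eval y p = 0 := by
  obtain ⟨k, hk⟩ := Function.ne_iff.mp hxy
  refine ⟨C (x k - y k)⁻¹ * (X k - C (y k)), ?_, ?_, ?_⟩
  · calc _ ≤ (C (x k - y k)⁻¹ : MvPolynomial σ F).totalDegree + (X k - C (y k)).totalDegree :=
          totalDegree_mul _ _
      _ ≤ 0 + 1 :=
          add_le_add (totalDegree_C _).le ((totalDegree_sub_C_le _ _).trans (totalDegree_X _).le)
      _ = 1 := zero_add 1
  · simp [inv_mul_cancel₀ (sub_ne_zero_of_ne hk)]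
  · simp

variable (F) in
noncomputable def evalAtₗ (X : ι → σ → F) : MvPolynomial σ F →ₗ[F] ι → F :=
  LinearMap.funLeft F F X ∘ₗ evalₗ F σ

@[simp]
theorem evalAtₗ_apply (X : ι → σ → F) (f : MvPolynomial σ F) (i : ι) :
    evalAtₗ F X f i = eval (X i) f :=
  rfl

variable [Fintype ι] [DecidableEq ι]

theorem exists_totalDegree_le_eval_eq_pi_single {X : ι → σ → F} (hX : Function.Injective X)
    (i : ι) : ∃ p : MvPolynomial σ F,
      p.totalDegree ≤ Fintype.card ι - 1 ∧ ∀ j, eval (X j) p = (Pi.single i 1 : ι → F) j := by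
  have hsep : ∀ j, ∃ p : MvPolynomial σ F,
      p.totalDegree ≤ 1 ∧ (j ≠ i → eval (X i) p = 1 ∧ eval (X j) p = 0) := by
    intro j
    by_cases hji : j = i
    · exact ⟨1, by simp, fun h => (h hji).elim⟩
    · obtain ⟨p, hp, h1, h0⟩ :=
        exists_totalDegree_le_one_eval_eq_one_eval_eq_zero (hX.ne (Ne.symm hji))
      exact ⟨p, hp, fun _ => ⟨h1, h0⟩⟩
  choose p hdeg hp using hsep
  refine ⟨∏ j ∈ univ.erase i, p j, ?_, fun j => ?_⟩
  · calc _ ≤ ∑ j ∈ univ.erase i, (p j).totalDegree := totalDegree_finsetProd _ _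
      _ ≤ ∑ _j ∈ univ.erase i, 1 := sum_le_sum fun j _ => hdeg j
      _ = Fintype.card ι - 1 := by simp [card_erase_of_mem]
  · rw [map_prod]
    rcases eq_or_ne j i with rfl | hji
    · simpa using prod_eq_one fun k hk => (hp k (ne_of_mem_erase hk)).1
    · rw [Pi.single_eq_of_ne hji]
      exact prod_eq_zero (mem_erase.mpr ⟨hji, mem_univ j⟩) (hp j hji).2

theorem exists_totalDegree_le_eval_eq {X : ι → σ → F} (hX : Function.Injective X) (v : ι → F) :
    ∃ f : MvPolynomial σ F,
      f.totalDegree ≤ Fintype.card ι - 1 ∧ ∀ j, eval (X j) f = v j := by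
  choose p hdeg hp using fun i => exists_totalDegree_le_eval_eq_pi_single hX i
  refine ⟨∑ i, C (v i) * p i, ?_, fun j => ?_⟩
  · refine (totalDegree_finsetSum _ _).trans (Finset.sup_le fun i _ => ?_)
    exact (totalDegree_mul _ _).trans (by simpa using hdeg i)
  · simp [hp, Pi.single_apply]

theorem surjective_evalAtₗ_domRestrict_restrictTotalDegree {X : ι → σ → F}
    (hX : Function.Injective X) {d : ℕ} (hd : Fintype.card ι - 1 ≤ d) :
    Function.Surjective ((evalAtₗ F X).domRestrict (restrictTotalDegree σ F d)) := by
  intro v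
  obtain ⟨f, hf, hfv⟩ := exists_totalDegree_le_eval_eq hX v
  exact ⟨⟨f, (mem_restrictTotalDegree _ _ _).mpr (hf.trans hd)⟩, _root_.funext hfv⟩

end MvPolynomial

theorem statement5_general (F : Type) [Field F] [Fintype F] (t d m : ℕ)
    (hdm : m - 1 ≤ d)
    (X : Fin m → (Fin t → F)) (hX : Function.Injective X) :
    {f : MvPolynomial (Fin t) F | f.totalDegree ≤ d ∧
        ∀ i : Fin m, MvPolynomial.eval (X i) f = 0}.ncard * Fintype.card F ^ m
      = {f : MvPolynomial (Fin t) F | f.totalDegree ≤ d}.ncard := by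
  set L := (evalAtₗ F X).domRestrict (restrictTotalDegree (Fin t) F d)
  have hL : Function.Surjective L :=
    surjective_evalAtₗ_domRestrict_restrictTotalDegree hX (by simpa using hdm)
  have hP : {f : MvPolynomial (Fin t) F | f.totalDegree ≤ d} =
      restrictTotalDegree (Fin t) F d := by
    ext f
    exact (mem_restrictTotalDegree _ _ _).symm
  have hZ : {f : MvPolynomial (Fin t) F | f.totalDegree ≤ d ∧ ∀ i, eval (X i) f = 0} =
      Subtype.val '' (LinearMap.ker L : Set (restrictTotalDegree (Fin t) F d)) := by
    ext f
    simp [L, mem_restrictTotalDegree, funext_iff, and_comm]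
  rw [hZ, hP, Set.ncard_image_of_injective _ Subtype.val_injective, ← Nat.card_coe_set_eq,
    ← Nat.card_coe_set_eq, SetLike.coe_sort_coe, SetLike.coe_sort_coe,
    LinearMap.natCard_eq_natCard_ker_mul_of_surjective hL, Nat.card_fun]
  simp

/-- over a finite field `F` with `q` elements (`q` a prime power), for
positive `t, d, m` with `d ≥ m − 1`, and any `m` distinct points `X₁,…,X_m ∈ F^t`,
the number of `t`-variable polynomials of total degree at most `d` vanishing at all the
`X_i` equals `|P_d(t)| / q^m`. -/
theorem statement5 (F : Type) [Field F] [Fintype F] (t d m : ℕ)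
    (ht : 1 ≤ t) (hd : 1 ≤ d) (hm : 1 ≤ m) (hdm : m - 1 ≤ d)
    (X : Fin m → (Fin t → F)) (hX : Function.Injective X) :
    {f : MvPolynomial (Fin t) F | f.totalDegree ≤ d ∧
        ∀ i : Fin m, MvPolynomial.eval (X i) f = 0}.ncard * Fintype.card F ^ m
      = {f : MvPolynomial (Fin t) F | f.totalDegree ≤ d}.ncard :=
  statement5_general F t d m hdm X hX
end

section
/- Let (T,R) be a balanced rooted tree with r = |R| ≥ 1 roots, a ≥ 1 unrooted vertices and b edges. Let n and p be positive integers, and let X, Y : R → Fin n be injective maps with disjoint images. For each j = 1, …, p let σ_j, τ_j : V(T) → Fin n be injective maps with σ_j restricted to R equal to X, τ_j restricted to R equal to Y, and σ_j(V(T)) ∩ τ_j(V(T)) = ∅. For an edge e = {u,v} of T write σ_j(e) = {σ_j u, σ_j v} and τ_j(e) = {τ_j u, τ_j v}, unordered pairs of distinct elements of Fin n. Call a set P of pairs of such unordered pairs determining if the equivalence relation generated by P relates σ_j(e) to τ_j(e) for every j ∈ {1,…,p} and every edge e of T. Let k be the minimum cardinality of a determining subset of {(σ_j(e), τ_j(e))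 : 1 ≤ j ≤ p, e an edge of T}. Then 2·a·k ≥ b·(|⋃_{j=1}^{p} (σ_j(V(T)) ∪ τ_j(V(T)))| − 2r). -/
open Finset

/-- The rooted tree `(T,R)` is balanced: every nonempty set `S` of unrooted vertices
satisfies `e(S)/|S| ≥ b/a`, i.e. `b·|S| ≤ e(S)·a`. -/
def IsBalanced {V : Type*} [Fintype V] [DecidableEq V] (T : SimpleGraph V)
    [DecidableRel T.Adj] (R : Finset V) : Prop :=
  ∀ S : Finset V, S.Nonempty → (∀ v ∈ S, v ∉ R) →
    T.edgeFinset.card * S.card ≤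
      (T.edgeFinset.filter (fun e => ∃ v ∈ S, v ∈ e)).card * (Fintype.card V - R.card)

/-!
Let `P` be a determining set with `|P| = k`. As `σ_j` and `τ_j` have disjoint images,
`σ_j(e) ≠ τ_j(e)`, so both occur as a coordinate of a pair in `P`: the union `H` of the `2p`
copies `σ_j(T)`, `τ_j(T)` has at most `2k` edges. Build `H` from the `2r` root images by adding
the copies one at a time. A copy whose set `S` of new vertices avoids `R` brings at least `e(S)`
new edges, namely the images of the edges of `T` meeting `S`, and balance gives
`b·|S| ≤ a·e(S)`. Summing, `b·(v(H) − 2r) ≤ a·e(H) ≤ 2ak`.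
-/

lemma Relation.EqvGen.exists_rel_of_ne {α : Type*} {r : α → α → Prop} {x y : α}
    (h : Relation.EqvGen r x y) (hxy : x ≠ y) :
    (∃ z, r x z ∨ r z x) ∧ ∃ z, r y z ∨ r z y := by
  induction h with
  | rel a b hab => exact ⟨⟨b, .inl hab⟩, a, .inr hab⟩
  | refl => exact absurd rfl hxy
  | symm a b _ ih => exact (ih hxy.symm).symm
  | trans a b c _ _ ih₁ ih₂ =>
      by_cases hab : a = b
      · subst hab; exact ih₂ hxy
      by_cases hbc : b = c
      · subst hbc; exact ih₁ hab
      exact ⟨(ih₁ hab).1, (ih₂ hbc).2⟩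

section PairEntries

variable {α : Type*} [DecidableEq α]

def pairEntries (P : Finset (α × α)) : Finset α :=
  P.image Prod.fst ∪ P.image Prod.snd

lemma card_pairEntries_le (P : Finset (α × α)) : #(pairEntries P) ≤ 2 * #P :=
  (card_union_le _ _).trans <| two_mul #P ▸ add_le_add card_image_le card_image_le

lemma mem_pairEntries {P : Finset (α × α)} {x : α} :
    x ∈ pairEntries P ↔ ∃ z, (x, z) ∈ P ∨ (z, x) ∈ P := by
  simp [pairEntries, exists_or]

lemma mem_pairEntries_of_eqvGen {P : Finset (α × α)} {x y : α}
    (h : Relation.EqvGen (fun x y => (x, y) ∈ P) x y) (hxy : x ≠ y) :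
    x ∈ pairEntries P ∧ y ∈ pairEntries P :=
  let ⟨hx, hy⟩ := h.exists_rel_of_ne hxy
  ⟨mem_pairEntries.mpr hx, mem_pairEntries.mpr hy⟩

end PairEntries

lemma Sym2.map_ne_map_of_disjoint_range {α β : Type*} {f g : α → β}
    (hfg : Disjoint (Set.range f) (Set.range g)) (e : Sym2 α) : e.map f ≠ e.map g := by
  intro h
  have hmem : f e.out.1 ∈ e.map g := h ▸ Sym2.mem_map.mpr ⟨_, e.out_fst_mem, rfl⟩
  obtain ⟨w, -, hw⟩ := Sym2.mem_map.mp hmem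
  exact Set.disjoint_left.mp hfg ⟨_, rfl⟩ ⟨w, hw⟩

lemma IsBalanced.card_edgeFinset_mul_card_le {V : Type*} [Fintype V] [DecidableEq V]
    {T : SimpleGraph V} [DecidableRel T.Adj] {R : Finset V} (hBal : IsBalanced T R)
    {S : Finset V} (hS : ∀ v ∈ S, v ∉ R) :
    #T.edgeFinset * #S ≤ #{e ∈ T.edgeFinset | ∃ v ∈ S, v ∈ e} * (Fintype.card V - #R) := by
  rcases S.eq_empty_or_nonempty with rfl | hne
  · simp
  · exact hBal S hne hS

section Copies

variable {V β ι : Type*} [Fintype V] [DecidableEq β]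
  (T : SimpleGraph V) [DecidableRel T.Adj] (φ : ι → V → β) (Q : Finset β)

/-- `Q` is to contain the images of the roots, which all copies share. -/
def copiesVerts (F : Finset ι) : Finset β :=
  Q ∪ F.biUnion fun i => univ.image (φ i)

def copiesEdges (F : Finset ι) : Finset (Sym2 β) :=
  F.biUnion fun i => T.edgeFinset.image (Sym2.map (φ i))

def newVerts (F : Finset ι) (i : ι) : Finset V :=
  {v | φ i v ∉ copiesVerts φ Q F}

variable {T φ Q}

lemma mem_copiesVerts_of_mem_copiesEdges {F : Finset ι} {q : Sym2 β}
    (hq : q ∈ copiesEdges T φ F) {w : β} (hw : w ∈ q) : w ∈ copiesVerts φ Q F := by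
  obtain ⟨i, hi, hq⟩ := mem_biUnion.mp hq
  obtain ⟨e, -, rfl⟩ := mem_image.mp hq
  obtain ⟨v, -, rfl⟩ := Sym2.mem_map.mp hw
  exact mem_union_right _ (mem_biUnion.mpr ⟨i, hi, mem_image_of_mem _ (mem_univ v)⟩)

lemma card_copiesVerts_insert [DecidableEq ι] (F : Finset ι) {i : ι}
    (hi : Function.Injective (φ i)) :
    #(copiesVerts φ Q (insert i F)) = #(copiesVerts φ Q F) + #(newVerts φ Q F i) := by
  have hunion : copiesVerts φ Q (insert i F) = copiesVerts φ Q F ∪ univ.image (φ i) := by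
    simp only [copiesVerts, biUnion_insert]
    ac_rfl
  have hnew : univ.image (φ i) \ copiesVerts φ Q F = (newVerts φ Q F i).image (φ i) := by
    rw [sdiff_eq_filter, filter_image, newVerts]
  rw [hunion, union_comm, ← card_sdiff_add_card, hnew, card_image_of_injective _ hi, add_comm]

lemma card_copiesEdges_insert_ge [DecidableEq V] [DecidableEq ι] (F : Finset ι) {i : ι}
    (hi : Function.Injective (φ i)) :
    #(copiesEdges T φ F) + #{e ∈ T.edgeFinset | ∃ v ∈ newVerts φ Q F i, v ∈ e} ≤
      #(copiesEdges T φ (insert i F)) := by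
  set C := {e ∈ T.edgeFinset | ∃ v ∈ newVerts φ Q F i, v ∈ e}.image (Sym2.map (φ i))
  have hdisj : Disjoint (copiesEdges T φ F) C := by
    refine disjoint_right.mpr fun q hq hqF => ?_
    obtain ⟨e, he, rfl⟩ := mem_image.mp hq
    obtain ⟨-, v, hv, hve⟩ := mem_filter.mp he
    exact (mem_filter.mp hv).2
      (mem_copiesVerts_of_mem_copiesEdges hqF (Sym2.mem_map.mpr ⟨v, hve, rfl⟩))
  have hsub : copiesEdges T φ F ∪ C ⊆ copiesEdges T φ (insert i F) := by
    rw [copiesEdges, copiesEdges, biUnion_insert, union_comm]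
    exact union_subset_union_left (image_subset_image (filter_subset _ _))
  rw [← card_image_of_injective _ (Sym2.map.injective hi), ← card_union_of_disjoint hdisj]
  exact card_le_card hsub

theorem IsBalanced.card_edgeFinset_mul_card_copiesVerts_sub_le [DecidableEq V] {R : Finset V}
    (hBal : IsBalanced T R) (hinj : ∀ i, Function.Injective (φ i))
    (hR : ∀ i, ∀ v ∈ R, φ i v ∈ Q) (F : Finset ι) :
    #T.edgeFinset * (#(copiesVerts φ Q F) - #Q) ≤
      #(copiesEdges T φ F) * (Fintype.card V - #R) := by
  classical
  induction F using Finset.induction_on with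
  | empty => simp [copiesVerts]
  | @insert i F _ ih =>
      have hS : ∀ v ∈ newVerts φ Q F i, v ∉ R := fun v hv hvR =>
        (mem_filter.mp hv).2 (mem_union_left _ (hR i v hvR))
      calc #T.edgeFinset * (#(copiesVerts φ Q (insert i F)) - #Q)
          ≤ #T.edgeFinset * (#(copiesVerts φ Q F) - #Q) +
              #T.edgeFinset * #(newVerts φ Q F i) := by
            rw [card_copiesVerts_insert F (hinj i), ← mul_add]
            exact Nat.mul_le_mul_left _ (by omega)
        _ ≤ (#(copiesEdges T φ F) +
              #{e ∈ T.edgeFinset | ∃ v ∈ newVerts φ Q F i, v ∈ e}) * (Fintype.card V - #R) := by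
            rw [add_mul]
            exact add_le_add ih (hBal.card_edgeFinset_mul_card_le hS)
        _ ≤ #(copiesEdges T φ (insert i F)) * (Fintype.card V - #R) :=
            Nat.mul_le_mul_right _ (card_copiesEdges_insert_ge F (hinj i))

lemma biUnion_image_union_image_subset_copiesVerts [Fintype ι] (σ τ : ι → V → β) :
    univ.biUnion (fun j => univ.image (σ j) ∪ univ.image (τ j)) ⊆
      copiesVerts (Sum.elim σ τ) Q univ := by
  intro x hx
  obtain ⟨j, -, hx⟩ := mem_biUnion.mp hx
  refine mem_union_right _ (mem_biUnion.mpr ?_)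
  rcases mem_union.mp hx with hx | hx
  · exact ⟨.inl j, mem_univ _, hx⟩
  · exact ⟨.inr j, mem_univ _, hx⟩

lemma copiesEdges_sumElim_subset_pairEntries [Fintype ι] {σ τ : ι → V → β}
    (hdisj : ∀ j, Disjoint (Set.range (σ j)) (Set.range (τ j)))
    {P : Finset (Sym2 β × Sym2 β)} (hP : ∀ j, ∀ e ∈ T.edgeFinset,
      Relation.EqvGen (fun x y => (x, y) ∈ P) (e.map (σ j)) (e.map (τ j))) :
    copiesEdges T (Sum.elim σ τ) univ ⊆ pairEntries P := by
  intro q hq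
  obtain ⟨i, -, hq⟩ := mem_biUnion.mp hq
  obtain ⟨e, he, rfl⟩ := mem_image.mp hq
  have hmem j := mem_pairEntries_of_eqvGen (hP j e he)
    (Sym2.map_ne_map_of_disjoint_range (hdisj j) e)
  cases i with
  | inl j => exact (hmem j).1
  | inr j => exact (hmem j).2

end Copies

theorem statement9_general {V : Type} [Fintype V] [DecidableEq V]
    (T : SimpleGraph V) [DecidableRel T.Adj] (R : Finset V)
    (r a b : ℕ)
    (hr : r = R.card) (ha : a = Fintype.card V - R.card) (hb : b = T.edgeFinset.card)
    (hBal : IsBalanced T R)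
    (n p : ℕ)
    (X Y : V → Fin n)
    (σ τ : Fin p → V → Fin n)
    (hσinj : ∀ j, Function.Injective (σ j)) (hτinj : ∀ j, Function.Injective (τ j))
    (hσR : ∀ j, ∀ v ∈ R, σ j v = X v) (hτR : ∀ j, ∀ v ∈ R, τ j v = Y v)
    (hdisj : ∀ j, Disjoint (Set.range (σ j)) (Set.range (τ j)))
    (k : ℕ)
    (hk : k = sInf {k' : ℕ | ∃ P : Finset (Sym2 (Fin n) × Sym2 (Fin n)),
      P ⊆ (Finset.univ ×ˢ T.edgeFinset).image
          (fun je : Fin p × Sym2 V => (Sym2.map (σ je.1) je.2, Sym2.map (τ je.1) je.2)) ∧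
      (∀ j : Fin p, ∀ e ∈ T.edgeFinset,
        Relation.EqvGen (fun x y => (x, y) ∈ P) (Sym2.map (σ j) e) (Sym2.map (τ j) e)) ∧
      P.card = k'}) :
    b * ((Finset.univ.biUnion (fun j : Fin p =>
        Finset.image (σ j) Finset.univ ∪ Finset.image (τ j) Finset.univ)).card - 2 * r)
      ≤ 2 * a * k := by
  have hk_mem : k ∈ _ := hk ▸ Nat.sInf_mem ?nonempty
  case nonempty =>
    exact ⟨_, _, subset_rfl,
      fun j e he => .rel _ _ (mem_image_of_mem _ (mk_mem_product (mem_univ j) he)), rfl⟩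
  obtain ⟨P, -, hPdet, rfl⟩ := hk_mem
  set Q := R.image X ∪ R.image Y
  have hQ : #Q ≤ 2 * r := hr ▸ two_mul #R ▸
    (card_union_le _ _).trans (add_le_add card_image_le card_image_le)
  have hR : ∀ i, ∀ v ∈ R, Sum.elim σ τ i v ∈ Q
    | .inl j, v, hv => show σ j v ∈ Q from hσR j v hv ▸ mem_union_left _ (mem_image_of_mem X hv)
    | .inr j, v, hv => show τ j v ∈ Q from hτR j v hv ▸ mem_union_right _ (mem_image_of_mem Y hv)
  have hverts := card_le_card (biUnion_image_union_image_subset_copiesVerts (Q := Q) σ τ)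
  subst hb ha
  calc #T.edgeFinset * (#(univ.biUnion fun j => univ.image (σ j) ∪ univ.image (τ j)) - 2 * r)
      ≤ #T.edgeFinset * (#(copiesVerts (Sum.elim σ τ) Q univ) - #Q) :=
        Nat.mul_le_mul_left _ (by omega)
    _ ≤ #(copiesEdges T (Sum.elim σ τ) univ) * (Fintype.card V - #R) :=
        hBal.card_edgeFinset_mul_card_copiesVerts_sub_le (Sum.rec hσinj hτinj) hR univ
    _ ≤ 2 * #P * (Fintype.card V - #R) := Nat.mul_le_mul_right _ <|
        (card_le_card (copiesEdges_sumElim_subset_pairEntries hdisj hPdet)).trans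
          (card_pairEntries_le P)
    _ = 2 * (Fintype.card V - #R) * #P := by ring

/-- the constraint-number inequality `2·a·k ≥ b·(v(H₁ ∪ H₂) − 2r)` for a
pair of unions of `p` labelled copies of a balanced rooted tree `(T,R)` rooted at the
pair `(X,Y)`, where `k` is the least size of a determining set of edge pairs. -/
theorem statement9 {V : Type} [Fintype V] [DecidableEq V]
    (T : SimpleGraph V) [DecidableRel T.Adj] (R : Finset V)
    (hTree : T.IsTree) (hInd : ∀ u ∈ R, ∀ v ∈ R, ¬ T.Adj u v)
    (r a b : ℕ)
    (hr : r = R.card) (ha : a = Fintype.card V - R.card) (hb : b = T.edgeFinset.card)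
    (hr1 : 1 ≤ r) (ha1 : 1 ≤ a) (hBal : IsBalanced T R)
    (n p : ℕ) (hn : 0 < n) (hp : 0 < p)
    (X Y : V → Fin n)
    (hXinj : Set.InjOn X R) (hYinj : Set.InjOn Y R)
    (hXY : Disjoint (R.image X) (R.image Y))
    (σ τ : Fin p → V → Fin n)
    (hσinj : ∀ j, Function.Injective (σ j)) (hτinj : ∀ j, Function.Injective (τ j))
    (hσR : ∀ j, ∀ v ∈ R, σ j v = X v) (hτR : ∀ j, ∀ v ∈ R, τ j v = Y v)
    (hdisj : ∀ j, Disjoint (Set.range (σ j)) (Set.range (τ j)))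
    (k : ℕ)
    (hk : k = sInf {k' : ℕ | ∃ P : Finset (Sym2 (Fin n) × Sym2 (Fin n)),
      P ⊆ (Finset.univ ×ˢ T.edgeFinset).image
          (fun je : Fin p × Sym2 V => (Sym2.map (σ je.1) je.2, Sym2.map (τ je.1) je.2)) ∧
      (∀ j : Fin p, ∀ e ∈ T.edgeFinset,
        Relation.EqvGen (fun x y => (x, y) ∈ P) (Sym2.map (σ j) e) (Sym2.map (τ j) e)) ∧
      P.card = k'}) :
    b * ((Finset.univ.biUnion (fun j : Fin p =>
        Finset.image (σ j) Finset.univ ∪ Finset.image (τ j) Finset.univ)).card - 2 * r)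
      ≤ 2 * a * k :=
  statement9_general T R r a b hr ha hb hBal n p X Y σ τ hσinj hτinj hσR hτR hdisj k hk
end

section
/- For all integers s, t ≥ 2 there exist c > 0 and N0 such that the following holds. Let χ be a proper edge colouring of the complete graph on [4m], 𝓕 the auxiliary bipartite graph, and 𝓕' a subgraph of 𝓕 with parts 𝓐 ⊆ X1×X2 and 𝓑 ⊆ Y1×Y2 containing no clean copy of K_{s,t}^{sub}. Let B ∈ 𝓑 and let 𝓨 be a subset of the 𝓕'-neighbourhood of B contained in 𝓐 with |𝓨| ≥ N0. Then the number of s-tuples (Y_1,…,Y_s) of pairwise distinct elements of 𝓨 such that no pair (Y_i, Y_j) with i ≠ j is red and the set {Y_1,…,Y_s} is clean is at least c·|𝓨|^s. -/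
open Finset

open scoped Classical

/-- Elements of the auxiliary graph: pairs of vertices of `K_{4m}`. -/
abbrev Pair (m : ℕ) := Fin (4 * m) × Fin (4 * m)

/-- Membership in `X1 × X2` where `X1 = {1,…,m}` and `X2 = {m+1,…,2m}`. -/
def InX1X2 {m : ℕ} (e : Pair m) : Prop :=
  e.1.val < m ∧ m ≤ e.2.val ∧ e.2.val < 2 * m

/-- Membership in `Y1 × Y2` where `Y1 = {2m+1,…,3m}` and `Y2 = {3m+1,…,4m}`. -/
def InY1Y2 {m : ℕ} (e : Pair m) : Prop :=
  2 * m ≤ e.1.val ∧ e.1.val < 3 * m ∧ 3 * m ≤ e.2.val ∧ e.2.val < 4 * m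

/-- Adjacency in the auxiliary bipartite graph `𝓕`: `(x1,x2)` is adjacent to `(y1,y2)`
iff `χ({x1,y1}) = χ({x2,y2})`, i.e. the two edges form a monochromatic matching. -/
def auxAdj {m : ℕ} {Q : Type*} (χ : Sym2 (Fin (4 * m)) → Q) (e f : Pair m) : Prop :=
  χ s(e.1, f.1) = χ s(e.2, f.2)

/-- A set of elements is clean if the underlying vertices of all its elements are
pairwise distinct. -/
def CleanSet {m : ℕ} (S : Finset (Pair m)) : Prop :=
  (∀ e ∈ S, e.1 ≠ e.2) ∧
  ∀ e ∈ S, ∀ f ∈ S, e ≠ f → e.1 ≠ f.1 ∧ e.1 ≠ f.2 ∧ e.2 ≠ f.1 ∧ e.2 ≠ f.2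

/-- The neighbourhood in `𝓕'` (with edge set `E`, oriented from `𝓐` to `𝓑`) of an
element of `𝓐`. -/
def nbrOfA {m : ℕ} (E : Finset (Pair m × Pair m)) (x : Pair m) : Finset (Pair m) :=
  (E.filter (fun e => e.1 = x)).image Prod.snd

/-- The neighbourhood in `𝓕'` of an element of `𝓑`. -/
def nbrOfB {m : ℕ} (E : Finset (Pair m × Pair m)) (y : Pair m) : Finset (Pair m) :=
  (E.filter (fun e => e.2 = y)).image Prod.fst

/-- Two distinct elements of `𝓐` form a red pair if their common neighbourhood in `𝓕'`
has size at least `2st`. -/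
def RedPair {m : ℕ} (s t : ℕ) (E : Finset (Pair m × Pair m)) (x x' : Pair m) : Prop :=
  x ≠ x' ∧ 2 * s * t ≤ (nbrOfA E x ∩ nbrOfA E x').card

/-- Two distinct elements of `𝓐` form a blue pair if their common neighbourhood in `𝓕'`
has size at least `1` and at most `2st − 1`. -/
def BluePair {m : ℕ} (s t : ℕ) (E : Finset (Pair m × Pair m)) (x x' : Pair m) : Prop :=
  x ≠ x' ∧ 1 ≤ (nbrOfA E x ∩ nbrOfA E x').card ∧
    (nbrOfA E x ∩ nbrOfA E x').card ≤ 2 * s * t - 1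

/-- `𝓕'` (parts `𝓐 ⊆ X1×X2`, `𝓑 ⊆ Y1×Y2`, edge set `E`) contains a clean copy of
`K_{s,t}^{sub}`. -/
def HasCleanKstSub {m : ℕ} (s t : ℕ) (A B : Finset (Pair m))
    (E : Finset (Pair m × Pair m)) : Prop :=
  ∃ (Af : Fin s → Pair m) (Ff : Fin t → Pair m) (Bf : Fin s → Fin t → Pair m),
    (∀ i, Af i ∈ A) ∧ (∀ j, Ff j ∈ A) ∧ (∀ i j, Bf i j ∈ B) ∧
    Function.Injective Af ∧ Function.Injective Ff ∧ (∀ i j, Af i ≠ Ff j) ∧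
    Function.Injective (fun p : Fin s × Fin t => Bf p.1 p.2) ∧
    (∀ i j, (Af i, Bf i j) ∈ E) ∧ (∀ i j, (Ff j, Bf i j) ∈ E) ∧
    CleanSet ((Finset.image Af Finset.univ ∪ Finset.image Ff Finset.univ) ∪
      Finset.image (fun p : Fin s × Fin t => Bf p.1 p.2) Finset.univ)

/-- `P(X₁,…,X_s)`: the set of `Y ∈ 𝓐` admitting `B₁,…,B_s ∈ 𝓑` with `B_i` adjacent in
`𝓕'` to both `X_i` and `Y`, such that `{X₁,…,X_s, Y, B₁,…,B_s}` is clean. -/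
noncomputable def Pset {m s : ℕ} (A B : Finset (Pair m))
    (E : Finset (Pair m × Pair m)) (Xf : Fin s → Pair m) : Finset (Pair m) :=
  A.filter (fun Y => ∃ Bf : Fin s → Pair m, (∀ i, Bf i ∈ B) ∧
    (∀ i, (Xf i, Bf i) ∈ E ∧ (Y, Bf i) ∈ E) ∧
    CleanSet (insert Y (Finset.image Xf Finset.univ) ∪ Finset.image Bf Finset.univ))

section AuxLemmas

variable {m : ℕ} {Q : Type*} {χ : Sym2 (Fin (4 * m)) → Q}

lemma color_cancel (hχ : IsProperEdgeColouring χ) {a c b : Fin (4 * m)}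
    (hab : a ≠ b) (hcb : c ≠ b) (h : χ s(a, b) = χ s(c, b)) : a = c := by
  by_contra hac
  refine hχ (e := s(a, b)) (f := s(c, b)) ?_ ?_ ?_ ⟨b, ?_, ?_⟩ h
  · rw [Sym2.mk_isDiag_iff]; exact hab
  · rw [Sym2.mk_isDiag_iff]; exact hcb
  · intro he
    rw [Sym2.eq_iff] at he
    rcases he with ⟨h1, _⟩ | ⟨h1, _⟩
    · exact hac h1
    · exact hab h1
  · simp
  · simp

lemma color_cancel' (hχ : IsProperEdgeColouring χ) {a b c : Fin (4 * m)}
    (hab : b ≠ a) (hcb : c ≠ a) (h : χ s(a, b) = χ s(a, c)) : b = c := by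
  refine color_cancel hχ hab hcb ?_
  rw [Sym2.eq_swap, h, Sym2.eq_swap]

lemma val_ne_of_lt_le {k : ℕ} {a b : Fin k} (h : a.val < b.val) : a ≠ b :=
  Fin.ne_of_val_ne (by omega)

/-- elements of `𝓨` (adjacent to a common `y ∈ Y1×Y2`) with equal first coordinates
are equal. -/
lemma yfst (hχ : IsProperEdgeColouring χ) {x x' y : Pair m}
    (hx : InX1X2 x) (hx' : InX1X2 x') (hy : InY1Y2 y)
    (h : auxAdj χ x y) (h' : auxAdj χ x' y) (e : x.1 = x'.1) : x = x' := by
  have h2 : χ s(x.2, y.2) = χ s(x'.2, y.2) := by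
    rw [← h, ← h', e]
  refine Prod.ext e (color_cancel hχ ?_ ?_ h2)
  · exact val_ne_of_lt_le (by obtain ⟨_, _, h3⟩ := hx; obtain ⟨_, _, h4, _⟩ := hy; omega)
  · exact val_ne_of_lt_le (by obtain ⟨_, _, h3⟩ := hx'; obtain ⟨_, _, h4, _⟩ := hy; omega)

lemma ysnd (hχ : IsProperEdgeColouring χ) {x x' y : Pair m}
    (hx : InX1X2 x) (hx' : InX1X2 x') (hy : InY1Y2 y)
    (h : auxAdj χ x y) (h' : auxAdj χ x' y) (e : x.2 = x'.2) : x = x' := by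
  have h2 : χ s(x.1, y.1) = χ s(x'.1, y.1) := by
    rw [h, h', e]
  refine Prod.ext (color_cancel hχ ?_ ?_ h2) e
  · exact val_ne_of_lt_le (by obtain ⟨h3, _⟩ := hx; obtain ⟨h4, _⟩ := hy; omega)
  · exact val_ne_of_lt_le (by obtain ⟨h3, _⟩ := hx'; obtain ⟨h4, _⟩ := hy; omega)

/-- elements of a neighbourhood of `x ∈ X1×X2` with equal first coordinates are equal. -/
lemma bfst (hχ : IsProperEdgeColouring χ) {x b b' : Pair m}
    (hx : InX1X2 x) (hb : InY1Y2 b) (hb' : InY1Y2 b')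
    (h : auxAdj χ x b) (h' : auxAdj χ x b') (e : b.1 = b'.1) : b = b' := by
  have h2 : χ s(x.2, b.2) = χ s(x.2, b'.2) := by
    rw [← h, ← h', e]
  refine Prod.ext e (color_cancel' hχ ?_ ?_ h2)
  · exact (val_ne_of_lt_le (by obtain ⟨_, _, h3⟩ := hx; obtain ⟨_, _, h4, _⟩ := hb; omega)).symm
  · exact (val_ne_of_lt_le (by obtain ⟨_, _, h3⟩ := hx; obtain ⟨_, _, h4, _⟩ := hb'; omega)).symm

lemma bsnd (hχ : IsProperEdgeColouring χ) {x b b' : Pair m}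
    (hx : InX1X2 x) (hb : InY1Y2 b) (hb' : InY1Y2 b')
    (h : auxAdj χ x b) (h' : auxAdj χ x b') (e : b.2 = b'.2) : b = b' := by
  have h2 : χ s(x.1, b.1) = χ s(x.1, b'.1) := by
    rw [h, h', e]
  refine Prod.ext (color_cancel' hχ ?_ ?_ h2) e
  · exact (val_ne_of_lt_le (by obtain ⟨h3, _⟩ := hx; obtain ⟨h4, _⟩ := hb; omega)).symm
  · exact (val_ne_of_lt_le (by obtain ⟨h3, _⟩ := hx; obtain ⟨h4, _⟩ := hb'; omega)).symm

/-- two distinct elements of `𝓨` have pairwise distinct coordinates. -/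
lemma cleanPairY (hχ : IsProperEdgeColouring χ) {x x' y : Pair m}
    (hx : InX1X2 x) (hx' : InX1X2 x') (hy : InY1Y2 y)
    (h : auxAdj χ x y) (h' : auxAdj χ x' y) (hne : x ≠ x') :
    x.1 ≠ x'.1 ∧ x.1 ≠ x'.2 ∧ x.2 ≠ x'.1 ∧ x.2 ≠ x'.2 := by
  refine ⟨fun e => hne (yfst hχ hx hx' hy h h' e), ?_, ?_,
    fun e => hne (ysnd hχ hx hx' hy h h' e)⟩
  · exact val_ne_of_lt_le (by obtain ⟨h1, _⟩ := hx; obtain ⟨_, h2, _⟩ := hx'; omega)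
  · exact (val_ne_of_lt_le (by obtain ⟨h1, _⟩ := hx'; obtain ⟨_, h2, _⟩ := hx; omega)).symm

lemma mem_nbrOfA {E : Finset (Pair m × Pair m)} {x C : Pair m} :
    C ∈ nbrOfA E x ↔ (x, C) ∈ E := by
  unfold nbrOfA
  simp only [Finset.mem_image, Finset.mem_filter]
  constructor
  · rintro ⟨p, ⟨hE, h1⟩, h2⟩
    have : p = (x, C) := Prod.ext h1 h2
    rwa [this] at hE
  · intro h; exact ⟨(x, C), ⟨h, rfl⟩, rfl⟩

lemma mem_nbrOfB {E : Finset (Pair m × Pair m)} {y C : Pair m} :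
    C ∈ nbrOfB E y ↔ (C, y) ∈ E := by
  unfold nbrOfB
  simp only [Finset.mem_image, Finset.mem_filter]
  constructor
  · rintro ⟨p, ⟨hE, h1⟩, h2⟩
    have : p = (C, y) := Prod.ext h2 h1
    rwa [this] at hE
  · intro h; exact ⟨(C, y), ⟨h, rfl⟩, rfl⟩

lemma redPair_symm {s t : ℕ} {E : Finset (Pair m × Pair m)} {x x' : Pair m}
    (h : RedPair s t E x x') : RedPair s t E x' x :=
  ⟨h.1.symm, by rw [Finset.inter_comm]; exact h.2⟩

end AuxLemmas


section Greedy

/-- Greedy selection of pairwise-clean representatives, one from each `N i`. -/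
lemma exists_clean_selection {m : ℕ} {ι : Type} [Fintype ι] [DecidableEq ι] [Nonempty ι]
    (N : ι → Finset (Pair m))
    (hcard : ∀ i, 2 * Fintype.card ι ≤ (N i).card)
    (hfst : ∀ i, ∀ C ∈ N i, ∀ D ∈ N i, C.1 = D.1 → C = D)
    (hsnd : ∀ i, ∀ C ∈ N i, ∀ D ∈ N i, C.2 = D.2 → C = D)
    (hY : ∀ i, ∀ C ∈ N i, InY1Y2 C) :
    ∃ f : ι → Pair m, (∀ i, f i ∈ N i) ∧
      ∀ i j, i ≠ j →
        (f i).1 ≠ (f j).1 ∧ (f i).1 ≠ (f j).2 ∧ (f i).2 ≠ (f j).1 ∧ (f i).2 ≠ (f j).2 := by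
  have hne : (N (Classical.arbitrary ι)).Nonempty := by
    rw [← Finset.card_pos]
    have := hcard (Classical.arbitrary ι)
    have : 0 < Fintype.card ι := Fintype.card_pos
    omega
  obtain ⟨d0, _⟩ := hne
  have key : ∀ S : Finset ι, ∃ f : ι → Pair m, (∀ i ∈ S, f i ∈ N i) ∧
      ∀ i ∈ S, ∀ j ∈ S, i ≠ j →
        (f i).1 ≠ (f j).1 ∧ (f i).1 ≠ (f j).2 ∧ (f i).2 ≠ (f j).1 ∧ (f i).2 ≠ (f j).2 := by
    intro S
    induction S using Finset.induction_on with
    | empty => exact ⟨fun _ => d0, fun i hi => absurd hi (Finset.notMem_empty i),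
        fun i hi => absurd hi (Finset.notMem_empty i)⟩
    | @insert a S ha IH =>
      obtain ⟨f, hf1, hf2⟩ := IH
      set bad : Finset (Pair m) :=
        (N a).filter (fun C => ∃ j ∈ S, C.1 = (f j).1 ∨ C.2 = (f j).2) with hbad
      have hbound : ∀ v w : Fin (4 * m),
          ((N a).filter (fun C => C.1 = v ∨ C.2 = w)).card ≤ 2 := by
        intro v w
        have hsub : (N a).filter (fun C => C.1 = v ∨ C.2 = w) ⊆
            (N a).filter (fun C => C.1 = v) ∪ (N a).filter (fun C => C.2 = w) := by
          intro C hC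
          rw [Finset.mem_filter] at hC
          rcases hC.2 with h | h
          · exact Finset.mem_union_left _ (Finset.mem_filter.2 ⟨hC.1, h⟩)
          · exact Finset.mem_union_right _ (Finset.mem_filter.2 ⟨hC.1, h⟩)
        refine (Finset.card_le_card hsub).trans ((Finset.card_union_le _ _).trans ?_)
        have h1 : ((N a).filter (fun C => C.1 = v)).card ≤ 1 := by
          rw [Finset.card_le_one]
          intro C hC D hD
          rw [Finset.mem_filter] at hC hD
          exact hfst a C hC.1 D hD.1 (hC.2.trans hD.2.symm)
        have h2 : ((N a).filter (fun C => C.2 = w)).card ≤ 1 := by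
          rw [Finset.card_le_one]
          intro C hC D hD
          rw [Finset.mem_filter] at hC hD
          exact hsnd a C hC.1 D hD.1 (hC.2.trans hD.2.symm)
        omega
      have hbadcard : bad.card ≤ 2 * S.card := by
        have hsub : bad ⊆ S.biUnion
            (fun j => (N a).filter (fun C => C.1 = (f j).1 ∨ C.2 = (f j).2)) := by
          intro C hC
          rw [hbad, Finset.mem_filter] at hC
          obtain ⟨hC1, j, hj, hj2⟩ := hC
          exact Finset.mem_biUnion.2 ⟨j, hj, Finset.mem_filter.2 ⟨hC1, hj2⟩⟩
        refine (Finset.card_le_card hsub).trans ((Finset.card_biUnion_le).trans ?_)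
        have := Finset.sum_le_card_nsmul S
          (fun j => ((N a).filter (fun C => C.1 = (f j).1 ∨ C.2 = (f j).2)).card) 2
          (fun j _ => hbound _ _)
        simpa [mul_comm] using this
      have hScard : S.card + 1 ≤ Fintype.card ι := by
        have : (insert a S).card ≤ Fintype.card ι := Finset.card_le_univ _
        rwa [Finset.card_insert_of_notMem ha] at this
      have hex : ((N a) \ bad).Nonempty := by
        rw [Finset.sdiff_nonempty]
        intro hsub
        have := Finset.card_le_card hsub
        have := hcard a
        omega
      obtain ⟨C, hC⟩ := hex
      rw [Finset.mem_sdiff] at hC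
      obtain ⟨hCN, hCbad⟩ := hC
      have hCclean : ∀ j ∈ S, C.1 ≠ (f j).1 ∧ C.2 ≠ (f j).2 := by
        intro j hj
        constructor
        · intro h
          exact hCbad (Finset.mem_filter.2 ⟨hCN, j, hj, Or.inl h⟩)
        · intro h
          exact hCbad (Finset.mem_filter.2 ⟨hCN, j, hj, Or.inr h⟩)
      refine ⟨Function.update f a C, ?_, ?_⟩
      · intro i hi
        rcases Finset.mem_insert.1 hi with hia | hiS
        · rw [hia, Function.update_self]; exact hCN
        · have hina : i ≠ a := fun h => ha (h ▸ hiS)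
          rw [Function.update_of_ne hina]; exact hf1 i hiS
      · intro i hi j hj hij
        have hYC : InY1Y2 C := hY a C hCN
        rcases Finset.mem_insert.1 hi with hia | hiS
        · rcases Finset.mem_insert.1 hj with hja | hjS
          · exact absurd (hia.trans hja.symm) hij
          · have hjna : j ≠ a := fun h => ha (h ▸ hjS)
            rw [hia, Function.update_self, Function.update_of_ne hjna]
            have hYj : InY1Y2 (f j) := hY j (f j) (hf1 j hjS)
            refine ⟨(hCclean j hjS).1, ?_, ?_, (hCclean j hjS).2⟩
            · exact val_ne_of_lt_le
                (by obtain ⟨_, h1, _⟩ := hYC; obtain ⟨_, _, h2, _⟩ := hYj; omega)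
            · exact (val_ne_of_lt_le
                (by obtain ⟨_, h1, _⟩ := hYj; obtain ⟨_, _, h2, _⟩ := hYC; omega)).symm
        · have hina : i ≠ a := fun h => ha (h ▸ hiS)
          rcases Finset.mem_insert.1 hj with hja | hjS
          · rw [hja, Function.update_self, Function.update_of_ne hina]
            have hYi : InY1Y2 (f i) := hY i (f i) (hf1 i hiS)
            refine ⟨fun h => (hCclean i hiS).1 h.symm, ?_, ?_,
              fun h => (hCclean i hiS).2 h.symm⟩
            · exact val_ne_of_lt_le
                (by obtain ⟨_, h1, _⟩ := hYi; obtain ⟨_, _, h2, _⟩ := hYC; omega)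
            · exact (val_ne_of_lt_le
                (by obtain ⟨_, h1, _⟩ := hYC; obtain ⟨_, _, h2, _⟩ := hYi; omega)).symm
          · have hjna : j ≠ a := fun h => ha (h ▸ hjS)
            rw [Function.update_of_ne hina, Function.update_of_ne hjna]
            exact hf2 i hiS j hjS hij
  obtain ⟨f, hf1, hf2⟩ := key Finset.univ
  exact ⟨f, fun i => hf1 i (Finset.mem_univ i),
    fun i j hij => hf2 i (Finset.mem_univ i) j (Finset.mem_univ j) hij⟩

end Greedy


section CommonLe

/-- If `𝓕'` has no clean `K_{s,t}^{sub}`, any `s`-subset of `𝓨` has at most `t-1`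
common red neighbours in `𝓨`. -/
lemma common_red_le {s t m : ℕ} {Q : Type} {χ : Sym2 (Fin (4 * m)) → Q}
    (hs : 2 ≤ s) (ht : 2 ≤ t) (hχ : IsProperEdgeColouring χ)
    {A B : Finset (Pair m)} {Ed : Finset (Pair m × Pair m)}
    (hA : ∀ x ∈ A, InX1X2 x) (hB : ∀ y ∈ B, InY1Y2 y)
    (hEd : ∀ e ∈ Ed, e.1 ∈ A ∧ e.2 ∈ B ∧ auxAdj χ e.1 e.2)
    (hno : ¬ HasCleanKstSub s t A B Ed)
    {y : Pair m} (hy : y ∈ B) {𝓨 : Finset (Pair m)}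
    (h𝓨1 : 𝓨 ⊆ nbrOfB Ed y) (h𝓨2 : 𝓨 ⊆ A)
    {S : Finset (Pair m)} (hS : S ⊆ 𝓨) (hScard : S.card = s) :
    (𝓨.filter (fun v => ∀ x ∈ S, RedPair s t Ed x v)).card ≤ t - 1 := by
  by_contra hcon
  push_neg at hcon
  have htle : t ≤ (𝓨.filter (fun v => ∀ x ∈ S, RedPair s t Ed x v)).card := by omega
  obtain ⟨T, hTsub, hTcard⟩ := Finset.exists_subset_card_eq htle
  -- the maps
  set Af : Fin s → Pair m := fun i => ((S.equivFinOfCardEq hScard).symm i : Pair m) with hAf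
  set Ff : Fin t → Pair m := fun j => ((T.equivFinOfCardEq hTcard).symm j : Pair m) with hFf
  have hAfS : ∀ i, Af i ∈ S := fun i => ((S.equivFinOfCardEq hScard).symm i).2
  have hFfT : ∀ j, Ff j ∈ T := fun j => ((T.equivFinOfCardEq hTcard).symm j).2
  have hAfY : ∀ i, Af i ∈ 𝓨 := fun i => hS (hAfS i)
  have hFfY : ∀ j, Ff j ∈ 𝓨 := fun j => (Finset.mem_filter.1 (hTsub (hFfT j))).1
  have hAfInj : Function.Injective Af :=
    fun i j h => (S.equivFinOfCardEq hScard).symm.injective (Subtype.coe_injective h)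
  have hFfInj : Function.Injective Ff :=
    fun i j h => (T.equivFinOfCardEq hTcard).symm.injective (Subtype.coe_injective h)
  have hred : ∀ i j, RedPair s t Ed (Af i) (Ff j) := fun i j =>
    (Finset.mem_filter.1 (hTsub (hFfT j))).2 (Af i) (hAfS i)
  -- the candidate neighbourhoods
  set N : Fin s × Fin t → Finset (Pair m) :=
    fun p => nbrOfA Ed (Af p.1) ∩ nbrOfA Ed (Ff p.2) with hN
  have hNadjA : ∀ p : Fin s × Fin t, ∀ C ∈ N p, (Af p.1, C) ∈ Ed := by
    intro p C hC
    exact mem_nbrOfA.1 (Finset.mem_inter.1 hC).1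
  have hNadjF : ∀ p : Fin s × Fin t, ∀ C ∈ N p, (Ff p.2, C) ∈ Ed := by
    intro p C hC
    exact mem_nbrOfA.1 (Finset.mem_inter.1 hC).2
  have hNY : ∀ p : Fin s × Fin t, ∀ C ∈ N p, InY1Y2 C := by
    intro p C hC
    exact hB C (hEd _ (hNadjA p C hC)).2.1
  have hXAf : ∀ i, InX1X2 (Af i) := fun i => hA _ (h𝓨2 (hAfY i))
  have hXFf : ∀ j, InX1X2 (Ff j) := fun j => hA _ (h𝓨2 (hFfY j))
  have hnonempty : Nonempty (Fin s × Fin t) :=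
    ⟨(⟨0, by omega⟩, ⟨0, by omega⟩)⟩
  obtain ⟨Bf0, hBf1, hBf2⟩ := exists_clean_selection N
    (by
      intro p
      have := (hred p.1 p.2).2
      simp only [Fintype.card_prod, Fintype.card_fin]
      rw [← mul_assoc] at *
      exact this)
    (by
      intro p C hC D hD h1
      exact bfst hχ (hXAf p.1) (hNY p C hC) (hNY p D hD)
        (hEd _ (hNadjA p C hC)).2.2 (hEd _ (hNadjA p D hD)).2.2 h1)
    (by
      intro p C hC D hD h1
      exact bsnd hχ (hXAf p.1) (hNY p C hC) (hNY p D hD)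
        (hEd _ (hNadjA p C hC)).2.2 (hEd _ (hNadjA p D hD)).2.2 h1)
    hNY
  -- assemble the clean K_{s,t}^{sub}
  apply hno
  refine ⟨Af, Ff, fun i j => Bf0 (i, j), fun i => h𝓨2 (hAfY i), fun j => h𝓨2 (hFfY j),
    ?_, hAfInj, hFfInj, fun i j => (hred i j).1, ?_, ?_, ?_, ?_⟩
  · intro i j
    exact (hEd _ (hNadjA (i, j) _ (hBf1 (i, j)))).2.1
  · -- injectivity of Bf
    intro p q h
    by_contra hpq
    have hne : ((p.1, p.2) : Fin s × Fin t) ≠ (q.1, q.2) := by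
      simpa using hpq
    exact (hBf2 _ _ hne).1 (congrArg Prod.fst h)
  · intro i j
    exact hNadjA (i, j) _ (hBf1 (i, j))
  · intro i j
    exact hNadjF (i, j) _ (hBf1 (i, j))
  · -- CleanSet
    set U := (Finset.image Af Finset.univ ∪ Finset.image Ff Finset.univ) ∪
      Finset.image (fun p : Fin s × Fin t => Bf0 (p.1, p.2)) Finset.univ with hU
    have hyY : InY1Y2 y := hB y hy
    have hadjy : ∀ e ∈ 𝓨, auxAdj χ e y := by
      intro e he
      exact (hEd _ (mem_nbrOfB.1 (h𝓨1 he))).2.2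
    have hmem : ∀ e ∈ U, (e ∈ 𝓨 ∧ InX1X2 e) ∨
        ((∃ p : Fin s × Fin t, e = Bf0 p) ∧ InY1Y2 e) := by
      intro e he
      rw [hU] at he
      rcases Finset.mem_union.1 he with h1 | h1
      · left
        rcases Finset.mem_union.1 h1 with h2 | h2
        · obtain ⟨i, _, rfl⟩ := Finset.mem_image.1 h2
          exact ⟨hAfY i, hXAf i⟩
        · obtain ⟨j, _, rfl⟩ := Finset.mem_image.1 h2
          exact ⟨hFfY j, hXFf j⟩
      · right
        obtain ⟨p, _, rfl⟩ := Finset.mem_image.1 h1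
        exact ⟨⟨(p.1, p.2), rfl⟩, hNY (p.1, p.2) _ (hBf1 (p.1, p.2))⟩
    constructor
    · intro e he
      rcases hmem e he with ⟨_, hX⟩ | ⟨_, hY2⟩
      · exact val_ne_of_lt_le (by obtain ⟨h1, h2, _⟩ := hX; omega)
      · exact val_ne_of_lt_le (by obtain ⟨_, h1, h2, _⟩ := hY2; omega)
    · intro e he f hf hef
      rcases hmem e he with ⟨heY, heX⟩ | ⟨⟨p, rfl⟩, heYY⟩
      · rcases hmem f hf with ⟨hfY, hfX⟩ | ⟨⟨q, rfl⟩, hfYY⟩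
        · exact cleanPairY hχ heX hfX hyY (hadjy e heY) (hadjy f hfY) hef
        · obtain ⟨he1, he2, _⟩ := heX
          obtain ⟨hf1, _, hf3, _⟩ := hfYY
          exact ⟨val_ne_of_lt_le (by omega), val_ne_of_lt_le (by omega),
            val_ne_of_lt_le (by omega), val_ne_of_lt_le (by omega)⟩
      · rcases hmem f hf with ⟨hfY, hfX⟩ | ⟨⟨q, rfl⟩, hfYY⟩
        · obtain ⟨hf1, hf2, _⟩ := hfX
          obtain ⟨he1, _, he3, _⟩ := heYY
          exact ⟨(val_ne_of_lt_le (by omega)).symm, (val_ne_of_lt_le (by omega)).symm,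
            (val_ne_of_lt_le (by omega)).symm, (val_ne_of_lt_le (by omega)).symm⟩
        · have hpq : p ≠ q := fun h => hef (by rw [h])
          have := hBf2 p q hpq
          simpa using this

end CommonLe


section Markov

/-- Double counting: few vertices of large red degree. -/
lemma markov_bound {s t m : ℕ} {Q : Type} {χ : Sym2 (Fin (4 * m)) → Q}
    (hs : 2 ≤ s) (ht : 2 ≤ t) (hχ : IsProperEdgeColouring χ)
    {A B : Finset (Pair m)} {Ed : Finset (Pair m × Pair m)}
    (hA : ∀ x ∈ A, InX1X2 x) (hB : ∀ y ∈ B, InY1Y2 y)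
    (hEd : ∀ e ∈ Ed, e.1 ∈ A ∧ e.2 ∈ B ∧ auxAdj χ e.1 e.2)
    (hno : ¬ HasCleanKstSub s t A B Ed)
    {y : Pair m} (hy : y ∈ B) {𝓨 : Finset (Pair m)}
    (h𝓨1 : 𝓨 ⊆ nbrOfB Ed y) (h𝓨2 : 𝓨 ⊆ A) (D : ℕ) :
    (𝓨.filter (fun v => D ≤ (𝓨.filter (fun w => RedPair s t Ed v w)).card)).card
      * Nat.choose D s ≤ (t - 1) * Nat.choose 𝓨.card s := by
  classical
  set H := 𝓨.filter (fun v => D ≤ (𝓨.filter (fun w => RedPair s t Ed v w)).card) with hH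
  set T : Finset (Pair m × Finset (Pair m)) :=
    (𝓨 ×ˢ (𝓨.powersetCard s)).filter (fun p => ∀ x ∈ p.2, RedPair s t Ed x p.1) with hT
  -- lower bound on T.card
  have hlow : H.card * Nat.choose D s ≤ T.card := by
    have hfib : T.card = ∑ v ∈ 𝓨, (T.filter (fun p => p.1 = v)).card := by
      refine Finset.card_eq_sum_card_fiberwise (fun p hp => ?_)
      rw [hT, Finset.mem_coe, Finset.mem_filter, Finset.mem_product] at hp
      exact hp.1.1
    have hterm : ∀ v ∈ H, Nat.choose D s ≤ (T.filter (fun p => p.1 = v)).card := by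
      intro v hv
      rw [hH, Finset.mem_filter] at hv
      obtain ⟨hvY, hvD⟩ := hv
      set R := 𝓨.filter (fun w => RedPair s t Ed v w) with hR
      have hinj : (R.powersetCard s).card ≤ (T.filter (fun p => p.1 = v)).card := by
        refine Finset.card_le_card_of_injOn (fun S => (v, S)) ?_ ?_
        · intro S hSmem
          rw [Finset.mem_coe, Finset.mem_powersetCard] at hSmem
          obtain ⟨hS1, hS2⟩ := hSmem
          rw [Finset.mem_coe, Finset.mem_filter, hT, Finset.mem_filter, Finset.mem_product]
          refine ⟨⟨⟨hvY, ?_⟩, ?_⟩, rfl⟩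
          · rw [Finset.mem_powersetCard]
            exact ⟨hS1.trans (Finset.filter_subset _ _), hS2⟩
          · intro x hx
            exact redPair_symm (Finset.mem_filter.1 (hS1 hx)).2
        · intro S1 _ S2 _ h
          exact congrArg Prod.snd h
      rw [Finset.card_powersetCard] at hinj
      exact le_trans (Nat.choose_le_choose s hvD) hinj
    calc H.card * Nat.choose D s = H.card • Nat.choose D s := by rw [smul_eq_mul]
      _ ≤ ∑ v ∈ H, (T.filter (fun p => p.1 = v)).card :=
          Finset.card_nsmul_le_sum H _ _ hterm
      _ ≤ ∑ v ∈ 𝓨, (T.filter (fun p => p.1 = v)).card :=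
          Finset.sum_le_sum_of_subset (Finset.filter_subset _ _)
      _ = T.card := hfib.symm
  -- upper bound on T.card
  have hup : T.card ≤ Nat.choose 𝓨.card s * (t - 1) := by
    have hfib : T.card = ∑ S ∈ 𝓨.powersetCard s, (T.filter (fun p => p.2 = S)).card := by
      refine Finset.card_eq_sum_card_fiberwise (fun p hp => ?_)
      rw [hT, Finset.mem_coe, Finset.mem_filter, Finset.mem_product] at hp
      exact hp.1.2
    have hterm : ∀ S ∈ 𝓨.powersetCard s, (T.filter (fun p => p.2 = S)).card ≤ t - 1 := by
      intro S hSmem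
      rw [Finset.mem_powersetCard] at hSmem
      obtain ⟨hS1, hS2⟩ := hSmem
      have hinj : (T.filter (fun p => p.2 = S)).card ≤
          (𝓨.filter (fun v => ∀ x ∈ S, RedPair s t Ed x v)).card := by
        refine Finset.card_le_card_of_injOn Prod.fst ?_ ?_
        · intro p hp
          rw [Finset.mem_coe, Finset.mem_filter, hT, Finset.mem_filter, Finset.mem_product] at hp
          obtain ⟨⟨⟨hp1, _⟩, hp3⟩, hp4⟩ := hp
          rw [Finset.mem_coe, Finset.mem_filter]
          exact ⟨hp1, fun x hx => hp3 x (hp4 ▸ hx)⟩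
        · intro p hp q hq h
          rw [Finset.mem_coe, Finset.mem_filter] at hp hq
          exact Prod.ext h (hp.2.trans hq.2.symm)
      exact hinj.trans (common_red_le hs ht hχ hA hB hEd hno hy h𝓨1 h𝓨2 hS1 hS2)
    calc T.card = ∑ S ∈ 𝓨.powersetCard s, (T.filter (fun p => p.2 = S)).card := hfib
      _ ≤ (𝓨.powersetCard s).card • (t - 1) := Finset.sum_le_card_nsmul _ _ _ hterm
      _ = Nat.choose 𝓨.card s * (t - 1) := by rw [smul_eq_mul, Finset.card_powersetCard]
  calc H.card * Nat.choose D s ≤ T.card := hlow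
    _ ≤ Nat.choose 𝓨.card s * (t - 1) := hup
    _ = (t - 1) * Nat.choose 𝓨.card s := mul_comm _ _

end Markov

section TupleCount

/-- Greedy counting of tuples avoiding a sparse relation. -/
lemma count_tuples {α : Type*} [Fintype α] [DecidableEq α] (V : Finset α)
    (R : α → α → Prop) (hsym : ∀ v w, R v w → R w v) (d : ℕ)
    (hdeg : ∀ v ∈ V, (V.filter (fun w => R v w)).card ≤ d) :
    ∀ k : ℕ, ∏ i ∈ Finset.range k, (V.card - i * (d + 1)) ≤
      (Finset.univ.filter (fun f : Fin k → α =>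
        (∀ i, f i ∈ V) ∧ Function.Injective f ∧
        ∀ i j, i ≠ j → ¬ R (f i) (f j))).card := by
  classical
  intro k
  induction k with
  | zero =>
    rw [Finset.prod_range_zero]
    refine Nat.one_le_iff_ne_zero.2 (Finset.card_ne_zero_of_mem
      (a := fun i : Fin 0 => i.elim0) ?_)
    rw [Finset.mem_filter]
    exact ⟨Finset.mem_univ _, fun i => i.elim0, fun i => i.elim0, fun i => i.elim0⟩
  | succ k IH =>
    set Gk := Finset.univ.filter (fun f : Fin k → α =>
        (∀ i, f i ∈ V) ∧ Function.Injective f ∧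
        ∀ i j, i ≠ j → ¬ R (f i) (f j)) with hGk
    set Gk1 := Finset.univ.filter (fun f : Fin (k+1) → α =>
        (∀ i, f i ∈ V) ∧ Function.Injective f ∧
        ∀ i j, i ≠ j → ¬ R (f i) (f j)) with hGk1
    have hmap : ∀ f ∈ Gk1, (fun i : Fin k => f i.castSucc) ∈ Gk := by
      intro f hf
      rw [hGk1, Finset.mem_filter] at hf
      obtain ⟨_, h1, h2, h3⟩ := hf
      rw [hGk, Finset.mem_filter]
      refine ⟨Finset.mem_univ _, fun i => h1 _, ?_, ?_⟩
      · intro i j h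
        exact Fin.castSucc_injective k (h2 h)
      · intro i j hij
        exact h3 _ _ (fun h => hij (Fin.castSucc_injective k h))
    have hfib : Gk1.card =
        ∑ g ∈ Gk, (Gk1.filter (fun f => (fun i : Fin k => f i.castSucc) = g)).card :=
      Finset.card_eq_sum_card_fiberwise hmap
    have hterm : ∀ g ∈ Gk, V.card - k * (d + 1) ≤
        (Gk1.filter (fun f => (fun i : Fin k => f i.castSucc) = g)).card := by
      intro g hg
      rw [hGk, Finset.mem_filter] at hg
      obtain ⟨_, hg1, hg2, hg3⟩ := hg
      set Ag := V.filter (fun v => ∀ i, v ≠ g i ∧ ¬ R (g i) v) with hAg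
      have hAgcard : V.card - k * (d + 1) ≤ Ag.card := by
        have hsplit := Finset.card_filter_add_card_filter_not
          (s := V) (p := fun v => ∀ i, v ≠ g i ∧ ¬ R (g i) v)
        have hbadsub : V.filter (fun v => ¬ ∀ i, v ≠ g i ∧ ¬ R (g i) v) ⊆
            Finset.univ.biUnion (fun i : Fin k =>
              insert (g i) (V.filter (fun w => R (g i) w))) := by
          intro v hv
          rw [Finset.mem_filter] at hv
          obtain ⟨hv1, hv2⟩ := hv
          push_neg at hv2
          obtain ⟨i, hi⟩ := hv2
          refine Finset.mem_biUnion.2 ⟨i, Finset.mem_univ _, ?_⟩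
          by_cases hveq : v = g i
          · exact hveq ▸ Finset.mem_insert_self _ _
          · exact Finset.mem_insert_of_mem (Finset.mem_filter.2 ⟨hv1, hi hveq⟩)
        have hbadcard :
            (V.filter (fun v => ¬ ∀ i, v ≠ g i ∧ ¬ R (g i) v)).card ≤ k * (d + 1) := by
          refine (Finset.card_le_card hbadsub).trans ((Finset.card_biUnion_le).trans ?_)
          have hone : ∀ i : Fin k,
              (insert (g i) (V.filter (fun w => R (g i) w))).card ≤ d + 1 := by
            intro i
            exact (Finset.card_insert_le _ _).trans
              (Nat.add_le_add_right (hdeg (g i) (hg1 i)) 1)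
          calc ∑ i : Fin k, (insert (g i) (V.filter (fun w => R (g i) w))).card
              ≤ ∑ _i : Fin k, (d + 1) := Finset.sum_le_sum (fun i _ => hone i)
            _ = k * (d + 1) := by
                simp [Finset.sum_const, Finset.card_univ, mul_comm]
        have h1 : V.card ≤ Ag.card + k * (d + 1) := by
          rw [← hsplit]
          exact Nat.add_le_add_left hbadcard _
        exact Nat.sub_le_iff_le_add.2 h1
      refine hAgcard.trans ?_
      refine Finset.card_le_card_of_injOn (fun v => Fin.snoc g v) ?_ ?_
      · intro v hv
        rw [hAg, Finset.mem_coe, Finset.mem_filter] at hv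
        obtain ⟨hv1, hv2⟩ := hv
        rw [Finset.mem_coe, Finset.mem_filter, hGk1, Finset.mem_filter]
        refine ⟨⟨Finset.mem_univ _, ?_, ?_, ?_⟩, ?_⟩
        · intro i
          rcases Fin.eq_castSucc_or_eq_last i with ⟨j, rfl⟩ | rfl
          · simp only [Fin.snoc_castSucc]; exact hg1 j
          · simp only [Fin.snoc_last]; exact hv1
        · intro i j h
          rcases Fin.eq_castSucc_or_eq_last i with ⟨i', rfl⟩ | rfl <;>
            rcases Fin.eq_castSucc_or_eq_last j with ⟨j', rfl⟩ | rfl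
          · simp only [Fin.snoc_castSucc] at h
            exact congrArg Fin.castSucc (hg2 h)
          · simp only [Fin.snoc_castSucc, Fin.snoc_last] at h
            exact absurd h.symm (hv2 i').1
          · simp only [Fin.snoc_castSucc, Fin.snoc_last] at h
            exact absurd h (hv2 j').1
          · rfl
        · intro i j hij
          rcases Fin.eq_castSucc_or_eq_last i with ⟨i', rfl⟩ | rfl <;>
            rcases Fin.eq_castSucc_or_eq_last j with ⟨j', rfl⟩ | rfl
          · simp only [Fin.snoc_castSucc]
            exact hg3 i' j' (fun h => hij (congrArg Fin.castSucc h))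
          · simp only [Fin.snoc_castSucc, Fin.snoc_last]
            exact (hv2 i').2
          · simp only [Fin.snoc_castSucc, Fin.snoc_last]
            exact fun h => (hv2 j').2 (hsym _ _ h)
          · exact absurd rfl hij
        · funext i
          simp [Fin.snoc_castSucc]
      · intro v _ w _ h
        have h2 := congrFun h (Fin.last k)
        simpa only [Fin.snoc_last] using h2
    calc ∏ i ∈ Finset.range (k + 1), (V.card - i * (d + 1))
        = (∏ i ∈ Finset.range k, (V.card - i * (d + 1))) * (V.card - k * (d + 1)) :=
          Finset.prod_range_succ _ _
      _ ≤ Gk.card * (V.card - k * (d + 1)) := Nat.mul_le_mul_right _ IH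
      _ = Gk.card • (V.card - k * (d + 1)) := by rw [smul_eq_mul]
      _ ≤ ∑ g ∈ Gk, (Gk1.filter (fun f => (fun i : Fin k => f i.castSucc) = g)).card :=
          Finset.card_nsmul_le_sum _ _ _ hterm
      _ = Gk1.card := hfib.symm

end TupleCount


/-- if `𝓕'` contains no clean copy of `K_{s,t}^{sub}`, then for any
`B ∈ 𝓑` and any large enough subset `𝓨` of its neighbourhood, at least `c·|𝓨|^s` of
the `s`-tuples of distinct elements of `𝓨` are pairwise non-red and clean. -/
theorem statement17 (s t : ℕ) (hs : 2 ≤ s) (ht : 2 ≤ t) :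
    ∃ (c : ℝ) (N0 : ℕ), 0 < c ∧
    ∀ (m : ℕ) (Q : Type) (χ : Sym2 (Fin (4 * m)) → Q), IsProperEdgeColouring χ →
    ∀ (A B : Finset (Pair m)) (Ed : Finset (Pair m × Pair m)),
      (∀ x ∈ A, InX1X2 x) → (∀ y ∈ B, InY1Y2 y) →
      (∀ e ∈ Ed, e.1 ∈ A ∧ e.2 ∈ B ∧ auxAdj χ e.1 e.2) →
      ¬ HasCleanKstSub s t A B Ed →
    ∀ y ∈ B, ∀ 𝓨 : Finset (Pair m), 𝓨 ⊆ nbrOfB Ed y → 𝓨 ⊆ A →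
      N0 ≤ 𝓨.card →
      c * (𝓨.card : ℝ) ^ s ≤
        ((Finset.univ.filter (fun Yf : Fin s → Pair m =>
            (∀ i, Yf i ∈ 𝓨) ∧ Function.Injective Yf ∧
            (∀ i j, i ≠ j → ¬ RedPair s t Ed (Yf i) (Yf j)) ∧
            CleanSet (Finset.image Yf Finset.univ))).card : ℝ) := by
  classical
  refine ⟨(1 / 8 : ℝ) ^ s, 16 * s * s + 8 * ((t - 1) * (16 * s) ^ s + s) + 16 * s,
    by positivity, ?_⟩
  intro m Q χ hχ A B Ed hA hB hEd hno y hy 𝓨 h𝓨1 h𝓨2 hn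
  set Kc := (t - 1) * (16 * s) ^ s with hKc
  set n := 𝓨.card with hn'
  -- basic arithmetic consequences of `N0 ≤ n`
  have hspos : 0 < s := by omega
  have hnss : 16 * s * s ≤ n :=
    le_trans (le_trans (Nat.le_add_right _ _) (Nat.le_add_right _ _)) hn
  have hnK : 8 * (Kc + s) ≤ n :=
    le_trans (le_trans (Nat.le_add_left _ _) (Nat.le_add_right _ _)) hn
  have hn16s : 16 * s ≤ n := le_trans (Nat.le_add_left _ _) hn
  set D := n / (4 * s) with hD
  set E := n / (8 * s) with hE
  have hsE : s ≤ E := by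
    rw [hE, Nat.le_div_iff_mul_le (by omega)]
    calc s * (8 * s) = 8 * (s * s) := by ring
      _ ≤ 16 * (s * s) := Nat.mul_le_mul_right _ (by omega)
      _ = 16 * s * s := by ring
      _ ≤ n := hnss
  have h2E : 2 * E ≤ D := by
    rw [hD, Nat.le_div_iff_mul_le (by omega)]
    calc 2 * E * (4 * s) = E * (8 * s) := by ring
      _ ≤ n := by rw [hE]; exact Nat.div_mul_le_self n (8 * s)
  have hED : E ≤ D + 1 - s := by omega
  -- few vertices of large red degree
  set H := 𝓨.filter (fun v => D ≤ (𝓨.filter (fun w => RedPair s t Ed v w)).card) with hH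
  have hHK : H.card ≤ Kc := by
    have hmak := markov_bound hs ht hχ hA hB hEd hno hy h𝓨1 h𝓨2 D
    have h4 : E ^ s ≤ Nat.choose D s * s.factorial := by
      calc E ^ s ≤ (D + 1 - s) ^ s := Nat.pow_le_pow_left hED s
        _ ≤ Nat.descFactorial D s := Nat.pow_sub_le_descFactorial D s
        _ = s.factorial * Nat.choose D s := Nat.descFactorial_eq_factorial_mul_choose D s
        _ = Nat.choose D s * s.factorial := mul_comm _ _
    have h5 : H.card * E ^ s ≤ (t - 1) * n ^ s := by
      calc H.card * E ^ s ≤ H.card * (Nat.choose D s * s.factorial) :=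
            Nat.mul_le_mul_left _ h4
        _ = (H.card * Nat.choose D s) * s.factorial := by ring
        _ ≤ ((t - 1) * Nat.choose n s) * s.factorial := Nat.mul_le_mul_right _ hmak
        _ = (t - 1) * (s.factorial * Nat.choose n s) := by ring
        _ = (t - 1) * Nat.descFactorial n s := by
            rw [Nat.descFactorial_eq_factorial_mul_choose]
        _ ≤ (t - 1) * n ^ s := Nat.mul_le_mul_left _ (Nat.descFactorial_le_pow n s)
    have h6 : n ≤ 16 * s * E := by
      have hdm := (Nat.div_add_mod n (8 * s)).symm
      have hmod : n % (8 * s) < 8 * s := Nat.mod_lt _ (by omega)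
      have h8 : 8 * s ≤ 8 * s * E :=
        Nat.le_mul_of_pos_right _ (by omega)
      calc n = 8 * s * E + n % (8 * s) := by rw [hE]; exact hdm
        _ ≤ 8 * s * E + 8 * s := Nat.add_le_add_left hmod.le _
        _ ≤ 8 * s * E + 8 * s * E := Nat.add_le_add_left h8 _
        _ = 16 * s * E := by ring
    have h7 : (t - 1) * n ^ s ≤ Kc * E ^ s := by
      calc (t - 1) * n ^ s ≤ (t - 1) * (16 * s * E) ^ s :=
            Nat.mul_le_mul_left _ (Nat.pow_le_pow_left h6 s)
        _ = (t - 1) * ((16 * s) ^ s * E ^ s) := by rw [mul_pow]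
        _ = Kc * E ^ s := by rw [hKc]; ring
    have hEpos : 0 < E ^ s := pow_pos (by omega) s
    exact Nat.le_of_mul_le_mul_right (h5.trans h7) hEpos
  -- the greedy count on `𝓨 \ H`
  set V := 𝓨 \ H with hV
  have hVcard : n - Kc ≤ V.card :=
    le_trans (Nat.sub_le_sub_left hHK n) (Finset.le_card_sdiff H 𝓨)
  have hdeg : ∀ v ∈ V, (V.filter (fun w => RedPair s t Ed v w)).card ≤ D := by
    intro v hv
    rw [hV, Finset.mem_sdiff] at hv
    obtain ⟨hv1, hv2⟩ := hv
    rw [hH, Finset.mem_filter] at hv2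
    push_neg at hv2
    have hlt := hv2 hv1
    have hsub : V.filter (fun w => RedPair s t Ed v w) ⊆
        𝓨.filter (fun w => RedPair s t Ed v w) :=
      Finset.filter_subset_filter _ Finset.sdiff_subset
    have := Finset.card_le_card hsub
    omega
  -- each greedy factor is at least n/4
  have hfac : ∀ i ∈ Finset.range s, n / 4 ≤ V.card - i * (D + 1) := by
    intro i hi
    rw [Finset.mem_range] at hi
    have h1 : i * (D + 1) ≤ s * D + s := by
      calc i * (D + 1) = i * D + i := by ring
        _ ≤ s * D + s := Nat.add_le_add (Nat.mul_le_mul_right D hi.le) hi.le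
    have h2 : s * D ≤ n / 4 := by
      rw [Nat.le_div_iff_mul_le (by norm_num : 0 < 4)]
      calc s * D * 4 = D * (4 * s) := by ring
        _ ≤ n := by rw [hD]; exact Nat.div_mul_le_self n (4 * s)
    have h5 : n / 4 + n / 4 + (Kc + s) ≤ n := by omega
    refine Nat.le_sub_of_add_le ?_
    calc n / 4 + i * (D + 1) ≤ n / 4 + (s * D + s) := Nat.add_le_add_left h1 _
      _ ≤ n / 4 + (n / 4 + s) := Nat.add_le_add_left (Nat.add_le_add_right h2 s) _
      _ ≤ n - Kc := by omega
      _ ≤ V.card := hVcard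
  have hprod : (n / 4) ^ s ≤ ∏ i ∈ Finset.range s, (V.card - i * (D + 1)) := by
    have hc : ∏ _i ∈ Finset.range s, (n / 4) = (n / 4) ^ s := by
      rw [Finset.prod_const, Finset.card_range]
    rw [← hc]
    exact Finset.prod_le_prod (fun i _ => Nat.zero_le _) hfac
  have h8n : n ≤ 8 * (n / 4) := by omega
  have hbase : (n : ℝ) / 8 ≤ ((n / 4 : ℕ) : ℝ) := by
    have hc : (n : ℝ) ≤ 8 * ((n / 4 : ℕ) : ℝ) := by exact_mod_cast h8n
    linarith
  -- good tuples for `V` are good tuples for `𝓨`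
  have hsubset : Finset.univ.filter (fun f : Fin s → Pair m =>
        (∀ i, f i ∈ V) ∧ Function.Injective f ∧
        ∀ i j, i ≠ j → ¬ RedPair s t Ed (f i) (f j)) ⊆
      Finset.univ.filter (fun Yf : Fin s → Pair m =>
        (∀ i, Yf i ∈ 𝓨) ∧ Function.Injective Yf ∧
        (∀ i j, i ≠ j → ¬ RedPair s t Ed (Yf i) (Yf j)) ∧
        CleanSet (Finset.image Yf Finset.univ)) := by
    intro f hf
    rw [Finset.mem_filter] at hf ⊢
    obtain ⟨_, h1, h2, h3⟩ := hf
    have h1' : ∀ i, f i ∈ 𝓨 := fun i => Finset.sdiff_subset (h1 i)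
    refine ⟨Finset.mem_univ _, h1', h2, h3, ?_, ?_⟩
    · intro e he
      obtain ⟨i, _, rfl⟩ := Finset.mem_image.1 he
      have hX := hA _ (h𝓨2 (h1' i))
      exact val_ne_of_lt_le (by obtain ⟨a1, a2, _⟩ := hX; omega)
    · intro e he f' hf' hef
      obtain ⟨i, _, rfl⟩ := Finset.mem_image.1 he
      obtain ⟨j, _, rfl⟩ := Finset.mem_image.1 hf'
      exact cleanPairY hχ (hA _ (h𝓨2 (h1' i))) (hA _ (h𝓨2 (h1' j))) (hB y hy)
        (hEd _ (mem_nbrOfB.1 (h𝓨1 (h1' i)))).2.2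
        (hEd _ (mem_nbrOfB.1 (h𝓨1 (h1' j)))).2.2 hef
  have hfinal : (n / 4) ^ s ≤
      (Finset.univ.filter (fun Yf : Fin s → Pair m =>
        (∀ i, Yf i ∈ 𝓨) ∧ Function.Injective Yf ∧
        (∀ i j, i ≠ j → ¬ RedPair s t Ed (Yf i) (Yf j)) ∧
        CleanSet (Finset.image Yf Finset.univ))).card :=
    le_trans hprod (le_trans (count_tuples V (RedPair s t Ed)
      (fun v w h => redPair_symm h) D hdeg s) (Finset.card_le_card hsubset))
  calc (1 / 8 : ℝ) ^ s * (n : ℝ) ^ s = ((n : ℝ) / 8) ^ s := by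
        rw [← mul_pow]; congr 1; ring
    _ ≤ ((n / 4 : ℕ) : ℝ) ^ s := pow_le_pow_left₀ (by positivity) hbase s
    _ ≤ _ := by exact_mod_cast hfinal
end
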